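/- arXiv:1208.4823 — 5 statements merged into one kernel-verified Lean document; each statement's English description precedes it below -/
import Mathlib

section
/- Let I_𝕀 be the smallest topologically invariant σ-ideal on ℝ² containing the segment 𝕀 = [0,1]×{0}; it consists of all subsets of countable unions ⋃_{k∈ω} h_k(𝕀) where each h_k : ℝ² → ℝ² is a homeomorphism. Then add(I_𝕀) = ω₁, the first uncountable cardinal. -/
open Set Cardinal

/-- The segment `𝕀 = [0,1] × {0}` in the plane `ℝ²`. -/
def segII : Set (ℝ × ℝ) := Set.Icc (0 : ℝ) 1 ×ˢ ({0} : Set ℝ)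

/-- The smallest topologically invariant σ-ideal on `ℝ²` containing the segment
`𝕀 = [0,1] × {0}`: it consists of all subsets of countable unions
`⋃ₖ hₖ(𝕀)` where each `hₖ` is a homeomorphism of `ℝ²`. -/
def idealII : Set (Set (ℝ × ℝ)) :=
  {A | ∃ h : ℕ → ((ℝ × ℝ) ≃ₜ (ℝ × ℝ)), A ⊆ ⋃ k, (⇑(h k)) '' segII}

/-- The covering number `cov(I)`. -/
noncomputable def covIdeal {X : Type*} (I : Set (Set X)) : Cardinal :=
  sInf {c : Cardinal | ∃ 𝒜 : Set (Set X), 𝒜 ⊆ I ∧ ⋃₀ 𝒜 = Set.univ ∧ Cardinal.mk 𝒜 = c}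

/-- The uniformity number `non(I)`. -/
noncomputable def nonIdeal {X : Type*} (I : Set (Set X)) : Cardinal :=
  sInf {c : Cardinal | ∃ A : Set X, A ∉ I ∧ Cardinal.mk A = c}

/-- The relative additivity `add(I, J)`. -/
noncomputable def addRelIdeal {X : Type*} (I J : Set (Set X)) : Cardinal :=
  sInf {c : Cardinal | ∃ 𝒜 : Set (Set X), 𝒜 ⊆ I ∧ ⋃₀ 𝒜 ∉ J ∧ Cardinal.mk 𝒜 = c}

/-- The additivity `add(I)`. -/
noncomputable def addIdeal {X : Type*} (I : Set (Set X)) : Cardinal := addRelIdeal I I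

/-- The relative cofinality `cof(I, J)`. -/
noncomputable def cofRelIdeal {X : Type*} (I J : Set (Set X)) : Cardinal :=
  sInf {c : Cardinal | ∃ ℬ : Set (Set X), ℬ ⊆ J ∧ (∀ A ∈ I, ∃ B ∈ ℬ, A ⊆ B) ∧
    Cardinal.mk ℬ = c}

/-- The cofinality `cof(I)`. -/
noncomputable def cofIdeal {X : Type*} (I : Set (Set X)) : Cardinal := cofRelIdeal I I


/-!
A countable union of countable unions of homeomorphic copies of `𝕀` is again such a union, so
`add(I_𝕀) ≥ ω₁`. Conversely, for `|S| = ω₁` the segments `[0,1] × {y}`, `y ∈ S`, lie in `I_𝕀`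
but their union does not: if `[0,1] × S ⊆ ⋃ₖ hₖ(𝕀)`, then by Baire each `[0,1] × {y}` contains
a nondegenerate subsegment of some `hₖ(𝕀)`. For a fixed `k` these subsegments pull back under
`hₖ` to pairwise disjoint nondegenerate arcs in `𝕀`, of which there are only countably many.
-/

theorem exists_nonempty_interior_of_subset_iUnion_isClosed {X ι : Type*} [TopologicalSpace X]
    [BaireSpace X] [Countable ι] {U : Set X} (hU : IsOpen U) (hne : U.Nonempty)
    {F : ι → Set X} (hF : ∀ i, IsClosed (F i)) (hUF : U ⊆ ⋃ i, F i) :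
    ∃ i, (interior (F i)).Nonempty := by
  have := hU.baireSpace
  have := hne.to_subtype
  obtain ⟨i, x, hx⟩ := nonempty_interior_of_iUnion_of_closed
    (fun i => (hF i).preimage continuous_subtype_val)
    (iUnion_eq_univ_iff.2 fun x => by simpa using hUF x.2)
  have hopen := hU.isOpenMap_subtype_val _ (isOpen_interior (s := (↑) ⁻¹' F i))
  exact ⟨i, x, interior_maximal (image_subset_iff.2 interior_subset) hopen ⟨x, hx, rfl⟩⟩

theorem Set.PairwiseDisjoint.countable_of_isPreconnected_of_nontrivial {ι : Type*} {s : Set ι}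
    {f : ι → Set ℝ} (hd : s.PairwiseDisjoint f) (hc : ∀ i ∈ s, IsPreconnected (f i))
    (hn : ∀ i ∈ s, (f i).Nontrivial) : s.Countable :=
  hd.countable_of_nonempty_interior fun i hi =>
    (hc i hi).convex.nontrivial_iff_nonempty_interior.mp (hn i hi)

theorem isClosed_segII : IsClosed segII := isClosed_Icc.prod isClosed_singleton

theorem fst_injOn_segII : segII.InjOn Prod.fst :=
  fun _ hp _ hq h => Prod.ext h (hp.2.trans hq.2.symm)

theorem exists_Icc_prod_subset_of_Ioo_prod_subset_iUnion {ι : Type*} [Countable ι]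
    {A : ι → Set (ℝ × ℝ)}
    (hA : ∀ k, IsClosed (A k)) {c d y : ℝ} (hcd : c < d) (hy : Ioo c d ×ˢ {y} ⊆ ⋃ k, A k) :
    ∃ k a b, a < b ∧ Icc a b ×ˢ {y} ⊆ A k := by
  obtain ⟨k, x, hx⟩ := exists_nonempty_interior_of_subset_iUnion_isClosed isOpen_Ioo
    (nonempty_Ioo.2 hcd) (F := fun k => (·, y) ⁻¹' A k)
    (fun k => (hA k).preimage (by fun_prop))
    (fun x hx => by simpa using hy (mk_mem_prod hx (mem_singleton y)))
  obtain ⟨b, hxb, hsub⟩ := mem_nhdsGE_iff_exists_Icc_subset.1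
    (mem_nhdsWithin_of_mem_nhds (mem_interior_iff_mem_nhds.1 hx))
  refine ⟨k, x, b, hxb, ?_⟩
  rintro ⟨x', _⟩ ⟨hx', rfl⟩
  exact hsub hx'

theorem countable_setOf_Icc_prod_subset_image_segII (h : ℝ × ℝ ≃ₜ ℝ × ℝ) :
    {y : ℝ | ∃ a b, a < b ∧ Icc a b ×ˢ {y} ⊆ h '' segII}.Countable := by
  set T := {y : ℝ | ∃ a b, a < b ∧ Icc a b ×ˢ {y} ⊆ h '' segII}
  choose! a b hab hsub using fun y (hy : y ∈ T) => hy
  have hseg : ∀ y ∈ T, ∀ x ∈ Icc (a y) (b y), h.symm (x, y) ∈ segII := by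
    intro y hy x hx
    obtain ⟨p, hp, hpx⟩ := hsub y hy (mk_mem_prod hx (mem_singleton y))
    rwa [← hpx, h.symm_apply_apply]
  have hfst : ∀ y ∈ T, ∀ z ∈ T, ∀ x ∈ Icc (a y) (b y), ∀ x' ∈ Icc (a z) (b z),
      (h.symm (x, y)).1 = (h.symm (x', z)).1 → x = x' ∧ y = z := fun y hy z hz x hx x' hx' e =>
    Prod.ext_iff.1 (h.symm.injective (fst_injOn_segII (hseg y hy x hx) (hseg z hz x' hx') e))
  refine PairwiseDisjoint.countable_of_isPreconnected_of_nontrivial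
    (f := fun y => (fun x => (h.symm (x, y)).1) '' Icc (a y) (b y)) ?_ ?_ ?_
  · intro y hy z hz hne
    refine disjoint_left.2 ?_
    rintro _ ⟨x, hx, rfl⟩ ⟨x', hx', e⟩
    exact hne (hfst y hy z hz x hx x' hx' e.symm).2
  · exact fun y _ => isPreconnected_Icc.image _ (by fun_prop)
  · intro y hy
    refine Nontrivial.image_of_injOn ?_ fun x hx x' hx' e => (hfst y hy y hy x hx x' hx' e).1
    exact ⟨a y, left_mem_Icc.2 (hab y hy).le, b y, right_mem_Icc.2 (hab y hy).le, (hab y hy).ne⟩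

theorem Icc_prod_notMem_idealII {S : Set ℝ} (hS : ¬ S.Countable) :
    Icc (0 : ℝ) 1 ×ˢ S ∉ idealII := by
  rintro ⟨h, hsub⟩
  refine hS ((countable_iUnion fun k =>
    countable_setOf_Icc_prod_subset_image_segII (h k)).mono fun y hy => ?_)
  have hline : Ioo (0 : ℝ) 1 ×ˢ {y} ⊆ ⋃ k, h k '' segII :=
    (prod_mono Ioo_subset_Icc_self (singleton_subset_iff.2 hy)).trans hsub
  obtain ⟨k, a, b, hab, hk⟩ := exists_Icc_prod_subset_of_Ioo_prod_subset_iUnion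
    (fun k => (h k).isClosedMap _ isClosed_segII) zero_lt_one hline
  exact mem_iUnion.2 ⟨k, a, b, hab, hk⟩

theorem sUnion_mem_idealII {𝒜 : Set (Set (ℝ × ℝ))} (h𝒜 : 𝒜 ⊆ idealII) (hc : 𝒜.Countable) :
    ⋃₀ 𝒜 ∈ idealII := by
  rcases eq_empty_or_nonempty 𝒜 with rfl | hne
  · exact ⟨fun _ => Homeomorph.refl _, by simp⟩
  obtain ⟨A, rfl⟩ := hc.exists_eq_range hne
  choose h hh using fun n => h𝒜 (mem_range_self n)
  refine ⟨fun m => h m.unpair.1 m.unpair.2, sUnion_range A ▸ iUnion_subset fun n x hx => ?_⟩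
  obtain ⟨k, hk⟩ := mem_iUnion.1 (hh n hx)
  exact mem_iUnion.2 ⟨Nat.pair n k, by simpa using hk⟩

theorem Icc_prod_singleton_mem_idealII (y : ℝ) : Icc (0 : ℝ) 1 ×ˢ {y} ∈ idealII := by
  refine ⟨fun _ => Homeomorph.addRight ((0 : ℝ), y), ?_⟩
  rintro ⟨x, _⟩ ⟨hx, rfl⟩
  exact mem_iUnion.2 ⟨0, (x, 0), mk_mem_prod hx (mem_singleton 0), by simp⟩

theorem addRelIdeal_eq_aleph_one {X : Type*} {I J : Set (Set X)}
    (hσ : ∀ 𝒜 ⊆ I, 𝒜.Countable → ⋃₀ 𝒜 ∈ J) (h𝒜 : ∃ 𝒜 ⊆ I, ⋃₀ 𝒜 ∉ J ∧ #𝒜 ≤ ℵ₁) :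
    addRelIdeal I J = ℵ₁ := by
  obtain ⟨𝒜, hI, hJ, hcard⟩ := h𝒜
  refine le_antisymm (le_trans (csInf_le' ⟨𝒜, hI, hJ, rfl⟩) hcard)
    (le_csInf ⟨#𝒜, 𝒜, hI, hJ, rfl⟩ ?_)
  rintro _ ⟨ℬ, hℬI, hℬJ, rfl⟩
  rw [aleph_one_le_iff, ← not_le, le_aleph0_iff_set_countable]
  exact fun hc => hℬJ (hσ ℬ hℬI hc)

/-- `add(I_𝕀) = ω₁`. -/
theorem stmt8 : addIdeal idealII = Cardinal.aleph 1 := by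
  obtain ⟨S, hS⟩ : ∃ S : Set ℝ, #S = ℵ₁ :=
    le_mk_iff_exists_set.1 (mk_real ▸ aleph_one_le_continuum)
  have hSc : ¬ S.Countable := by
    rw [← le_aleph0_iff_set_countable, hS, not_le]
    exact aleph0_lt_aleph_one
  refine addRelIdeal_eq_aleph_one (fun _ => sUnion_mem_idealII)
    ⟨(fun y => Icc 0 1 ×ˢ {y}) '' S, ?_, ?_, mk_image_le.trans hS.le⟩
  · rintro _ ⟨y, -, rfl⟩
    exact Icc_prod_singleton_mem_idealII y
  · rw [sUnion_image, ← prod_iUnion₂, biUnion_of_singleton]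
    exact Icc_prod_notMem_idealII hSc
end

section
/- Let I_𝕀 be the smallest topologically invariant σ-ideal on ℝ² containing the segment 𝕀 = [0,1]×{0}; it consists of all subsets of countable unions ⋃_{k∈ω} h_k(𝕀) where each h_k : ℝ² → ℝ² is a homeomorphism. Then cof(I_𝕀) = 𝔠, the cardinality of the continuum. -/
open Set Cardinal

/-!
Homeomorphisms of `ℝ²` are determined by their values on `ℚ²`, so there are only `𝔠` of them and
only `𝔠` countable unions `⋃ₖ hₖ(𝕀)`; these form a cofinal family.

Conversely, every vertical segment `{t} × [0,1]` lies in the ideal. If it is covered by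
`⋃ₖ hₖ(𝕀)`, the Baire category theorem yields `k` such that `hₖ(𝕀)` contains a nondegenerate
vertical segment on the line `x = t`. Its preimage under `hₖ` is a nondegenerate subarc of `𝕀`,
so it contains a rational point `(q, 0)`, and `hₖ(q, 0)` lies on that line. Hence a member of a
cofinal family together with a pair `(k, q)` accounts for at most one `t`, and a cofinal family has
at least `𝔠` members.
-/

universe u

theorem cofRelIdeal_le_mk {X : Type u} {I J ℬ : Set (Set X)} (hℬ : ℬ ⊆ J)
    (hcof : ∀ A ∈ I, ∃ B ∈ ℬ, A ⊆ B) : cofRelIdeal I J ≤ #ℬ :=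
  csInf_le' ⟨ℬ, hℬ, hcof, rfl⟩

theorem le_cofRelIdeal {X : Type u} {I J : Set (Set X)} {c : Cardinal.{u}}
    (hne : ∃ ℬ ⊆ J, ∀ A ∈ I, ∃ B ∈ ℬ, A ⊆ B)
    (h : ∀ ℬ ⊆ J, (∀ A ∈ I, ∃ B ∈ ℬ, A ⊆ B) → c ≤ #ℬ) : c ≤ cofRelIdeal I J := by
  obtain ⟨ℬ, hℬ, hcof⟩ := hne
  exact le_csInf ⟨_, ℬ, hℬ, hcof, rfl⟩ fun _ ⟨ℬ', hℬ', hcof', hc⟩ => hc ▸ h ℬ' hℬ' hcof'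

theorem IsOpen.exists_inter_interior_nonempty_of_subset_iUnion {X ι : Type*} [TopologicalSpace X]
    [BaireSpace X] [Countable ι] {U : Set X} (hU : IsOpen U) (hne : U.Nonempty)
    {C : ι → Set X} (hC : ∀ i, IsClosed (C i)) (hcov : U ⊆ ⋃ i, C i) :
    ∃ i, (U ∩ interior (C i)).Nonempty := by
  -- Baire's theorem for the closed cover `C i ∪ Uᶜ` of the whole space.
  have hD : ⋃ i, (C i ∪ Uᶜ) = Set.univ := by
    refine eq_univ_of_forall fun x => mem_iUnion.2 ?_
    by_cases hx : x ∈ U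
    · obtain ⟨i, hi⟩ := mem_iUnion.1 (hcov hx)
      exact ⟨i, .inl hi⟩
    · obtain ⟨i, -⟩ := mem_iUnion.1 (hcov hne.some_mem)
      exact ⟨i, .inr hx⟩
  obtain ⟨x, hxU, hx⟩ := (dense_iUnion_interior_of_closed
    (fun i => (hC i).union hU.isClosed_compl) hD).inter_open_nonempty U hU hne
  obtain ⟨i, hi⟩ := mem_iUnion.1 hx
  have hsub : U ∩ interior (C i ∪ Uᶜ) ⊆ C i := fun y hy =>
    (interior_subset hy.2).resolve_right (not_not_intro hy.1)
  have hopen : IsOpen (U ∩ interior (C i ∪ Uᶜ)) := hU.inter isOpen_interior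
  exact ⟨i, x, hxU, interior_maximal hsub hopen ⟨hxU, hi⟩⟩

theorem IsPreconnected.exists_rat_mem {s : Set ℝ} (hs : IsPreconnected s) (hnt : s.Nontrivial) :
    ∃ q : ℚ, (q : ℝ) ∈ s := by
  obtain ⟨a, ha, b, hb, hab⟩ := hnt
  obtain ⟨q, hq⟩ := exists_rat_btwn (min_lt_max.2 hab)
  exact ⟨q, hs.ordConnected.uIcc_subset ha hb (Ioo_subset_Icc_self hq)⟩

theorem ContinuousMap.mk_le_pow_aleph0 {X Y : Type u} [TopologicalSpace X] [TopologicalSpace Y]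
    [TopologicalSpace.SeparableSpace X] [T2Space Y] [Nonempty Y] :
    #C(X, Y) ≤ #Y ^ ℵ₀ := by
  obtain ⟨D, hDc, hDd⟩ := TopologicalSpace.exists_countable_dense X
  have hinj : Function.Injective fun (f : C(X, Y)) (d : D) => f d := fun f g hfg =>
    ContinuousMap.ext <| congrFun <|
      Continuous.ext_on hDd f.continuous g.continuous fun d hd => congrFun hfg ⟨d, hd⟩
  calc #C(X, Y) ≤ #(D → Y) := mk_le_of_injective hinj
    _ = #Y ^ #D := by rw [mk_arrow, lift_id, lift_id]
    _ ≤ #Y ^ ℵ₀ := power_le_power_left (mk_ne_zero Y) hDc.le_aleph0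

theorem mk_homeomorph_prod_real_le : #((ℝ × ℝ) ≃ₜ (ℝ × ℝ)) ≤ 𝔠 :=
  calc #((ℝ × ℝ) ≃ₜ (ℝ × ℝ)) ≤ #C(ℝ × ℝ, ℝ × ℝ) :=
        mk_le_of_injective (f := fun f ↦ (⟨f, f.continuous⟩ : C(ℝ × ℝ, ℝ × ℝ))) fun f g hfg =>
          Homeomorph.ext (ContinuousMap.congr_fun hfg)
    _ ≤ #(ℝ × ℝ) ^ ℵ₀ := ContinuousMap.mk_le_pow_aleph0
    _ = 𝔠 := by rw [mk_prod, lift_id, mk_real, continuum_mul_self, continuum_power_aleph0]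

def segIIUnion (h : ℕ → (ℝ × ℝ) ≃ₜ (ℝ × ℝ)) : Set (ℝ × ℝ) := ⋃ k, h k '' segII

theorem vertical_segment_mem_idealII (t : ℝ) : {t} ×ˢ Icc (0 : ℝ) 1 ∈ idealII := by
  refine ⟨fun _ => (Homeomorph.prodComm ℝ ℝ).trans (Homeomorph.addLeft (t, 0)), ?_⟩
  rintro ⟨x, y⟩ ⟨rfl, hy⟩
  refine mem_iUnion.2 ⟨0, (y, 0), ⟨hy, rfl⟩, ?_⟩
  simp

theorem exists_rat_fst_eq_of_vertical_subset {t : ℝ} {h : ℕ → (ℝ × ℝ) ≃ₜ (ℝ × ℝ)}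
    (hcov : {t} ×ˢ Icc (0 : ℝ) 1 ⊆ segIIUnion h) : ∃ k, ∃ q : ℚ, (h k (q, 0)).1 = t := by
  set C : ℕ → Set ℝ := fun k => (t, ·) ⁻¹' (h k '' segII)
  have hC : ∀ k, IsClosed (C k) := fun k =>
    ((isCompact_Icc.prod isCompact_singleton).image (h k).continuous).isClosed.preimage
      (Continuous.prodMk_right t)
  have hcovC : Ioo (0 : ℝ) 1 ⊆ ⋃ k, C k := fun y hy => by
    have hty : (t, y) ∈ ⋃ k, h k '' segII := hcov ⟨rfl, Ioo_subset_Icc_self hy⟩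
    obtain ⟨k, hk⟩ := mem_iUnion.1 hty
    exact mem_iUnion.2 ⟨k, hk⟩
  obtain ⟨k, hk⟩ := isOpen_Ioo.exists_inter_interior_nonempty_of_subset_iUnion
    (nonempty_Ioo.2 zero_lt_one) hC hcovC
  obtain ⟨c, d, hcd, hsub⟩ := (isOpen_Ioo.inter isOpen_interior).exists_Ioo_subset hk
  set γ : ℝ → ℝ × ℝ := fun y => (h k).symm (t, y)
  have hγ : γ '' Ioo c d ⊆ segII := by
    rintro _ ⟨y, hy, rfl⟩
    obtain ⟨p, hp, hpy⟩ := interior_subset (hsub hy).2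
    simpa [γ, ← hpy] using hp
  have hfst : InjOn Prod.fst (γ '' Ioo c d) := fun p hp p' hp' hpp' =>
    Prod.ext hpp' ((hγ hp).2.trans (hγ hp').2.symm)
  have hγinj : γ.Injective := (h k).symm.injective.comp (Prod.mk_right_injective t)
  obtain ⟨q, _, ⟨y, hy, rfl⟩, hyq⟩ := IsPreconnected.exists_rat_mem
    ((isPreconnected_Ioo.image γ (by fun_prop)).image _ continuous_fst.continuousOn)
    (((Ioo_infinite hcd).nontrivial.image hγinj).image_of_injOn hfst)
  have hγy : γ y = ((q : ℝ), 0) := Prod.ext hyq (hγ ⟨y, hy, rfl⟩).2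
  exact ⟨k, q, by rw [← hγy, Homeomorph.apply_symm_apply]⟩

theorem continuum_le_mk_of_cofinal {ℬ : Set (Set (ℝ × ℝ))} (hℬ : ℬ ⊆ idealII)
    (hcof : ∀ A ∈ idealII, ∃ B ∈ ℬ, A ⊆ B) : 𝔠 ≤ #ℬ := by
  choose H hH using fun B : ℬ => hℬ B.2
  have hlabel : ∀ t : ℝ, ∃ (B : ℬ) (k : ℕ) (q : ℚ), (H B k (q, 0)).1 = t := fun t => by
    obtain ⟨B, hB, htB⟩ := hcof _ (vertical_segment_mem_idealII t)
    obtain ⟨k, q, hq⟩ := exists_rat_fst_eq_of_vertical_subset (htB.trans (hH ⟨B, hB⟩))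
    exact ⟨⟨B, hB⟩, k, q, hq⟩
  choose B k q hq using hlabel
  have hinj : Function.Injective fun t => (B t, k t, q t) := fun t t' htt' => by
    simp only [Prod.mk.injEq] at htt'
    rw [← hq t, ← hq t', htt'.1, htt'.2.1, htt'.2.2]
  have hle : 𝔠 ≤ #ℬ * ℵ₀ := calc
    𝔠 = #ℝ := mk_real.symm
    _ ≤ #(ℬ × ℕ × ℚ) := mk_le_of_injective hinj
    _ = #ℬ * ℵ₀ := by simp [mk_prod]
  by_contra! hlt
  exact (mul_lt_of_lt aleph0_le_continuum hlt aleph0_lt_continuum).not_ge hle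

theorem mk_range_segIIUnion_le : #(range segIIUnion) ≤ 𝔠 :=
  calc #(range segIIUnion) ≤ #(ℕ → (ℝ × ℝ) ≃ₜ (ℝ × ℝ)) := mk_range_le
    _ = #((ℝ × ℝ) ≃ₜ (ℝ × ℝ)) ^ ℵ₀ := by rw [mk_arrow, lift_id, mk_nat, lift_aleph0]
    _ ≤ 𝔠 ^ ℵ₀ := power_le_power_right mk_homeomorph_prod_real_le
    _ = 𝔠 := continuum_power_aleph0

/-- `cof(I_𝕀) = 𝔠`. -/
theorem stmt9 : cofIdeal idealII = Cardinal.continuum := by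
  have hsub : range segIIUnion ⊆ idealII := by
    rintro _ ⟨h, rfl⟩
    exact ⟨h, subset_rfl⟩
  have hcof : ∀ A ∈ idealII, ∃ B ∈ range segIIUnion, A ⊆ B := fun A ⟨h, hA⟩ =>
    ⟨_, mem_range_self h, hA⟩
  exact le_antisymm ((cofRelIdeal_le_mk hsub hcof).trans mk_range_segIIUnion_le)
    (le_cofRelIdeal ⟨_, hsub, hcof⟩ fun _ => continuum_le_mk_of_cofinal)
end

section
/- Let n ≥ 1 and let C₁, …, Cₙ be Cantor sets in the real line ℝ. Then the product ∏_{i=1}^n Cᵢ is a tame Cantor set in ℝⁿ; that is, there exists a homeomorphism h : ℝⁿ → ℝⁿ mapping ∏_{i=1}^n Cᵢ into the line ℝ×{0}^{n-1}. -/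
/-!
Digit sums `∑ₖ bₖ 4^{-e(i,k)}`, with `e : ι × ℕ → ℕ` injective, place the digits of different
coordinates `i` at disjoint positions of one base-4 expansion, so the sum over `i` determines
every summand. Each Cantor set `Cᵢ` is mapped injectively into the `i`-th digit set by a continuous
`fᵢ : ℝ → ℝ` (Tietze), and `C_j` even by a homeomorphism `φ` of `ℝ`, built as a weighted sum of
ramps across the rational gaps of `C_j`. Applying `φ` to the `j`-th coordinate and then the shear
`x ↦ x + (∑_{i ≠ j} fᵢ xᵢ) e_j` makes the `j`-th coordinate injective on the product. On the
compact image the other coordinates are then continuous functions of the `j`-th one, and the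
shear subtracting Tietze extensions of them moves the set into the `j`-th axis.
-/

open Set Cardinal

/-- A σ-ideal: a nonempty family of sets closed under subsets and countable unions. -/
def IsSigmaIdeal {X : Type*} (I : Set (Set X)) : Prop :=
  I.Nonempty ∧ (∀ A ∈ I, ∀ B : Set X, B ⊆ A → B ∈ I) ∧
    ∀ f : ℕ → Set X, (∀ k, f k ∈ I) → (⋃ k, f k) ∈ I

/-- Non-trivial: contains an uncountable set and does not contain the whole space. -/
def IsNontrivialIdeal {X : Type*} (I : Set (Set X)) : Prop :=
  (∃ A ∈ I, ¬ A.Countable) ∧ Set.univ ∉ I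

/-- Topologically invariant: `I = {h(A) : A ∈ I}` for every homeomorphism `h`. -/
def TopInvariant {X : Type*} [TopologicalSpace X] (I : Set (Set X)) : Prop :=
  ∀ h : X ≃ₜ X, I = (fun A : Set X => (⇑h) '' A) '' I

/-- BP-base: every member is contained in a member having the Baire property. -/
def HasBPBase {X : Type*} [TopologicalSpace X] (I : Set (Set X)) : Prop :=
  ∀ A ∈ I, ∃ B ∈ I, A ⊆ B ∧ ∃ U : Set X, IsOpen U ∧ IsMeagre (symmDiff B U)

/-- Analytic base: every member is contained in an analytic member. -/
def HasAnalyticBase {X : Type*} [TopologicalSpace X] (I : Set (Set X)) : Prop :=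
  ∀ A ∈ I, ∃ B ∈ I, A ⊆ B ∧ MeasureTheory.AnalyticSet B

/-- A Cantor set: a subset homeomorphic to the Cantor cube `{0,1}^ω`. -/
def IsCantorSet {X : Type*} [TopologicalSpace X] (C : Set X) : Prop :=
  Nonempty (C ≃ₜ (ℕ → Bool))

/-- The line `ℝ × {0}^{n-1}` inside `ℝⁿ`. -/
def line (n : ℕ) : Set (Fin n → ℝ) := {x | ∀ i : Fin n, 0 < (i : ℕ) → x i = 0}

/-- A tame Cantor set in `ℝⁿ`: a Cantor set ambiently homeomorphic to a subset of
the line `ℝ × {0}^{n-1}`. -/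
def IsTameCantorSet {n : ℕ} (C : Set (Fin n → ℝ)) : Prop :=
  IsCantorSet C ∧ ∃ h : (Fin n → ℝ) ≃ₜ (Fin n → ℝ), (⇑h) '' C ⊆ line n

/-- The σ-ideal `σC₀` generated by tame Cantor sets in `ℝⁿ`. -/
def sigmaC0 (n : ℕ) : Set (Set (Fin n → ℝ)) :=
  {A | ∃ C : ℕ → Set (Fin n → ℝ), (∀ k, IsTameCantorSet (C k)) ∧ A ⊆ ⋃ k, C k}

/-- The σ-ideal of meager subsets of a topological space. -/
def meagerIdeal (X : Type*) [TopologicalSpace X] : Set (Set X) :=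
  {A : Set X | IsMeagre A}

open Function Filter Topology

/-- `cantorFunction c` is the case `w k = c ^ k`. -/
noncomputable def digitSum {κ : Type*} (w : κ → ℝ) (b : κ → Bool) : ℝ :=
  ∑' k, cond (b k) (w k) 0

section DigitSum

variable {κ : Type*}

lemma summable_cond {w : κ → ℝ} (hw : Summable w) (b : κ → Bool) :
    Summable fun k => cond (b k) (w k) 0 :=
  (hw.indicator {k | b k}).congr fun k => by cases h : b k <;> simp [h]

lemma continuous_digitSum {w : κ → ℝ} (hw : Summable w) (hw0 : ∀ k, 0 ≤ w k) :
    Continuous (digitSum w) :=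
  continuous_tsum
    (fun k => (continuous_of_discreteTopology (f := fun v : Bool => cond v (w k) 0)).comp
      (continuous_apply k))
    hw fun k b => by cases b k <;> simp [abs_of_nonneg (hw0 k), hw0 k]

lemma digitSum_pow_eq_cantorFunction (c : ℝ) {e : κ → ℕ} (he : Injective e) (b : κ → Bool) :
    digitSum (fun k => c ^ e k) b = cantorFunction c (extend e b fun _ => false) := by
  rw [cantorFunction, ← he.tsum_eq]
  · simp [digitSum, cantorFunctionAux, he.extend_apply]
  · intro m hm
    by_contra h
    simp [cantorFunctionAux, extend_apply' _ _ _ h] at hm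

lemma digitSum_pow_injective {c : ℝ} (hc0 : 0 < c) (hc : c < 1 / 2) {e : κ → ℕ}
    (he : Injective e) : Injective (digitSum fun k => c ^ e k) := by
  intro b b' h
  rw [digitSum_pow_eq_cantorFunction c he, digitSum_pow_eq_cantorFunction c he] at h
  funext k
  simpa [he.extend_apply] using congrFun (cantorFunction_injective hc0 hc h) (e k)

lemma sum_digitSum {ι : Type*} [Fintype ι] {w : ι × κ → ℝ} (hw : Summable w)
    (B : ι → κ → Bool) : ∑ i, digitSum (fun k => w (i, k)) (B i) = digitSum w (uncurry B) := by
  rw [digitSum, (summable_cond hw _).tsum_prod'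
    fun i => (summable_cond hw _).comp_injective (Prod.mk_right_injective i), tsum_fintype]
  rfl

/-- Digits at disjoint places of one base-`c` expansion do not interact. -/
lemma injOn_sum_of_mapsTo_range_digitSum {ι : Type*} [Fintype ι] {X : ι → Type*}
    {C : ∀ i, Set (X i)} {F : ∀ i, X i → ℝ} {c : ℝ} (hc0 : 0 < c) (hc : c < 1 / 2)
    {e : ι × ℕ → ℕ} (he : Injective e) (hinj : ∀ i, InjOn (F i) (C i))
    (hmaps : ∀ i, MapsTo (F i) (C i) (range (digitSum fun k => c ^ e (i, k)))) :
    InjOn (fun x => ∑ i, F i (x i)) {x : ∀ i, X i | ∀ i, x i ∈ C i} := by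
  have hw : Summable fun p => c ^ e p :=
    (summable_geometric_of_lt_one hc0.le (by linarith)).comp_injective he
  intro x hx y hy hxy
  choose Bx hBx using fun i => hmaps i (hx i)
  choose By hBy using fun i => hmaps i (hy i)
  have hB : Bx = By := by
    refine congrArg Function.curry
      (digitSum_pow_injective hc0 hc he (a₁ := uncurry Bx) (a₂ := uncurry By) ?_)
    rw [← sum_digitSum hw, ← sum_digitSum hw]
    simpa only [hBx, hBy] using hxy
  exact funext fun i => hinj i (hx i) (hy i) (by rw [← hBx, ← hBy, hB])

end DigitSum

section Straightening

noncomputable def ramp (u v x : ℝ) : ℝ := max 0 (min 1 ((x - u) / (v - u)))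

lemma continuous_ramp (u v : ℝ) : Continuous (ramp u v) := by
  unfold ramp; fun_prop

lemma ramp_mem_Icc (u v x : ℝ) : ramp u v x ∈ Icc 0 1 :=
  ⟨le_max_left _ _, max_le zero_le_one (min_le_left _ _)⟩

lemma monotone_ramp {u v : ℝ} (h : u < v) : Monotone (ramp u v) := fun x y hxy =>
  max_le_max le_rfl (min_le_min le_rfl (by gcongr))

lemma ramp_of_le {u v x : ℝ} (h : u < v) (hx : x ≤ u) : ramp u v x = 0 := by
  have : (x - u) / (v - u) ≤ 0 := div_nonpos_of_nonpos_of_nonneg (by linarith) (by linarith)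
  simp [ramp, min_le_of_right_le this]

lemma ramp_of_ge {u v x : ℝ} (h : u < v) (hx : v ≤ x) : ramp u v x = 1 := by
  have : 1 ≤ (x - u) / (v - u) := by rw [le_div_iff₀ (by linarith)]; linarith
  simp [ramp, min_eq_left this]

lemma exists_rat_gap {A : Set ℝ} (hA : IsClosed A) (hA' : interior A = ∅) {x y : ℝ}
    (hxy : x < y) : ∃ u v : ℚ, x < u ∧ u < v ∧ v < y ∧ Disjoint (Ioo (u : ℝ) v) A := by
  obtain ⟨z, hz, hzA⟩ : ∃ z ∈ Ioo x y, z ∉ A := not_subset.1 fun h => by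
    have := interior_maximal h isOpen_Ioo
    rw [hA', subset_empty_iff] at this
    exact (nonempty_Ioo.2 hxy).ne_empty this
  obtain ⟨l, r, hz', hlr⟩ := mem_nhds_iff_exists_Ioo_subset.1
    ((isOpen_Ioo.inter hA.isOpen_compl).mem_nhds ⟨hz, hzA⟩)
  obtain ⟨u, hlu, huz⟩ := exists_rat_btwn hz'.1
  obtain ⟨v, hzv, hvr⟩ := exists_rat_btwn hz'.2
  refine ⟨u, v, (hlr ⟨hlu, huz.trans hz'.2⟩).1.1, by exact_mod_cast huz.trans hzv,
    (hlr ⟨hz'.1.trans hzv, hvr⟩).1.2, disjoint_left.2 fun t ht => ?_⟩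
  exact (hlr (Ioo_subset_Ioo hlu.le hvr.le ht)).2

lemma exists_ramps_separating {A : Set ℝ} (hA : IsClosed A) (hA' : interior A = ∅) :
    ∃ d : ℕ → ℝ → ℝ, (∀ k, Continuous (d k)) ∧ (∀ k, Monotone (d k)) ∧
      (∀ k x, d k x ∈ Icc 0 1) ∧ (∀ k, ∀ x ∈ A, d k x = 0 ∨ d k x = 1) ∧
      ∀ x y, x < y → ∃ k, d k x = 0 ∧ d k y = 1 := by
  set S : Set (ℚ × ℚ) := {p | p.1 < p.2 ∧ Disjoint (Ioo (p.1 : ℝ) p.2) A}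
  have hS : S.Nonempty := by
    obtain ⟨u, v, -, huv, -, hdisj⟩ := exists_rat_gap hA hA' zero_lt_one
    exact ⟨(u, v), huv, hdisj⟩
  obtain ⟨g, hg⟩ := S.to_countable.exists_eq_range hS
  have hgS : ∀ k, g k ∈ S := fun k => hg ▸ mem_range_self k
  have hlt : ∀ k, ((g k).1 : ℝ) < (g k).2 := fun k => by exact_mod_cast (hgS k).1
  refine ⟨fun k => ramp (g k).1 (g k).2, fun k => continuous_ramp _ _,
    fun k => monotone_ramp (hlt k), fun k x => ramp_mem_Icc _ _ _, fun k x hx => ?_, ?_⟩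
  · by_cases hxu : x ≤ (g k).1
    · exact Or.inl (ramp_of_le (hlt k) hxu)
    · refine Or.inr (ramp_of_ge (hlt k) (not_lt.1 fun hxv => ?_))
      exact disjoint_left.1 (hgS k).2 ⟨not_le.1 hxu, hxv⟩ hx
  · intro x y hxy
    obtain ⟨u, v, hxu, huv, hvy, hdisj⟩ := exists_rat_gap hA hA' hxy
    obtain ⟨k, hk⟩ : (u, v) ∈ range g := hg ▸ ⟨huv, hdisj⟩
    have huv' : (u : ℝ) < v := by exact_mod_cast huv
    refine ⟨k, ?_, ?_⟩ <;> simp only [hk]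
    exacts [ramp_of_le huv' hxu.le, ramp_of_ge huv' hvy.le]

lemma exists_strictMono_mapsTo_range_digitSum {A : Set ℝ} (hA : IsClosed A)
    (hA' : interior A = ∅) {w : ℕ → ℝ} (hw : Summable w) (hw0 : ∀ k, 0 < w k) :
    ∃ f : ℝ → ℝ, Continuous f ∧ StrictMono f ∧ (∀ x, f x ∈ Icc 0 (∑' k, w k)) ∧
      MapsTo f A (range (digitSum w)) := by
  obtain ⟨d, hdc, hdm, hd01, hdA, hdsep⟩ := exists_ramps_separating hA hA'
  have hnn : ∀ x k, 0 ≤ w k * d k x := fun x k => mul_nonneg (hw0 k).le (hd01 k x).1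
  have hle : ∀ x k, w k * d k x ≤ w k := fun x k =>
    mul_le_of_le_one_right (hw0 k).le (hd01 k x).2
  have hsum : ∀ x, Summable fun k => w k * d k x := fun x => hw.of_nonneg_of_le (hnn x) (hle x)
  refine ⟨fun x => ∑' k, w k * d k x, ?_, fun x y hxy => ?_, fun x => ?_, fun x hx => ?_⟩
  · refine continuous_tsum (fun k => continuous_const.mul (hdc k)) hw fun k x => ?_
    rw [Real.norm_of_nonneg (hnn x k)]
    exact hle x k
  · obtain ⟨k, hkx, hky⟩ := hdsep x y hxy
    refine Summable.tsum_lt_tsum (i := k) (fun i => ?_) (by simpa [hkx, hky] using hw0 k)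
      (hsum x) (hsum y)
    exact mul_le_mul_of_nonneg_left (hdm i hxy.le) (hw0 i).le
  · exact ⟨tsum_nonneg (hnn x), (hsum x).tsum_le_tsum (hle x) hw⟩
  · refine ⟨fun k => decide (d k x = 1), tsum_congr fun k => ?_⟩
    rcases hdA k x hx with h | h <;> simp [h]

lemma exists_homeomorph_eqOn_of_strictMono {f : ℝ → ℝ} (hf : Continuous f) (hmono : StrictMono f)
    {a b : ℝ} (hab : ∀ x, f x ∈ Icc a b) {A : Set ℝ} (hA : Bornology.IsBounded A) :
    ∃ φ : ℝ ≃ₜ ℝ, EqOn φ f A := by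
  obtain ⟨R, hR, hAR⟩ := hA.subset_closedBall_lt 0 0
  rw [Real.closedBall_eq_Icc, zero_sub, zero_add] at hAR
  set g : ℝ → ℝ := fun x => f x + (max (x - R) 0 + min (x + R) 0)
  have hg_lb : ∀ x, x + (a - R) ≤ g x := fun x => by
    have := (hab x).1
    rcases max_cases (x - R) 0 with h | h <;> rcases min_cases (x + R) 0 with h' | h' <;> linarith
  have hg_ub : ∀ x, g x ≤ x + (b + R) := fun x => by
    have := (hab x).2
    rcases max_cases (x - R) 0 with h | h <;> rcases min_cases (x + R) 0 with h' | h' <;> linarith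
  have hgm : StrictMono g := hmono.add_monotone fun x y hxy =>
    add_le_add (max_le_max (by linarith) le_rfl) (min_le_min (by linarith) le_rfl)
  have hgs : Surjective g := (hf.add (by fun_prop)).surjective
    (tendsto_atTop_mono hg_lb (tendsto_atTop_add_const_right _ _ tendsto_id))
    (tendsto_atBot_mono hg_ub (tendsto_atBot_add_const_right _ _ tendsto_id))
  refine ⟨(hgm.orderIsoOfSurjective g hgs).toHomeomorph, fun x hx => ?_⟩
  obtain ⟨h1, h2⟩ := hAR hx
  change g x = f x
  simp [g, max_eq_right (by linarith : x - R ≤ 0), min_eq_right (by linarith : 0 ≤ x + R)]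

theorem exists_homeomorph_mapsTo_range_digitSum {A : Set ℝ} (hA : IsCompact A)
    (hA' : interior A = ∅) {w : ℕ → ℝ} (hw : Summable w) (hw0 : ∀ k, 0 < w k) :
    ∃ φ : ℝ ≃ₜ ℝ, MapsTo φ A (range (digitSum w)) := by
  obtain ⟨f, hfc, hfm, hfb, hfA⟩ :=
    exists_strictMono_mapsTo_range_digitSum hA.isClosed hA' hw hw0
  obtain ⟨φ, hφ⟩ := exists_homeomorph_eqOn_of_strictMono hfc hfm hfb hA.isBounded
  exact ⟨φ, fun x hx => hφ hx ▸ hfA hx⟩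

end Straightening

namespace IsCantorSet

variable {X : Type*} [TopologicalSpace X] {C : Set X}

lemma isCompact (hC : IsCantorSet C) : IsCompact C := by
  obtain ⟨e⟩ := hC
  exact isCompact_iff_compactSpace.2 e.symm.compactSpace

lemma interior_eq_empty {C : Set ℝ} (hC : IsCantorSet C) : interior C = ∅ := by
  obtain ⟨e⟩ := hC
  have hdisc : IsTotallyDisconnected C :=
    totallyDisconnectedSpace_subtype_iff.1 e.symm.totallyDisconnectedSpace
  refine eq_empty_of_forall_notMem fun x hx => ?_
  obtain ⟨a, b, hab, hsub⟩ := mem_nhds_iff_exists_Ioo_subset.1 (mem_interior_iff_mem_nhds.1 hx)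
  obtain ⟨y, hay, hyx⟩ := exists_between hab.1
  exact hyx.ne (hdisc _ hsub isPreconnected_Ioo ⟨hay, hyx.trans hab.2⟩ hab)

lemma exists_continuous_injOn_mapsTo_range_digitSum [NormalSpace X] [T2Space X]
    (hC : IsCantorSet C) {w : ℕ → ℝ} (hw : Summable w) (hw0 : ∀ k, 0 ≤ w k)
    (hinj : Injective (digitSum w)) :
    ∃ f : X → ℝ, Continuous f ∧ InjOn f C ∧ MapsTo f C (range (digitSum w)) := by
  let e := hC.some
  obtain ⟨f, hf⟩ := ContinuousMap.exists_restrict_eq hC.isCompact.isClosed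
    ⟨digitSum w ∘ e, (continuous_digitSum hw hw0).comp e.continuous⟩
  have hfC : ∀ x (hx : x ∈ C), f x = digitSum w (e ⟨x, hx⟩) := fun x hx =>
    congrFun (congrArg DFunLike.coe hf) ⟨x, hx⟩
  refine ⟨f, f.continuous, fun x hx y hy hxy => ?_, fun x hx => ⟨_, (hfC x hx).symm⟩⟩
  rw [hfC x hx, hfC y hy] at hxy
  exact congrArg Subtype.val (e.injective (hinj hxy))

lemma pi {ι : Type*} [Countable ι] [Nonempty ι] {X : ι → Type*} [∀ i, TopologicalSpace (X i)]
    {C : ∀ i, Set (X i)} (hC : ∀ i, IsCantorSet (C i)) :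
    IsCantorSet {x : ∀ i, X i | ∀ i, x i ∈ C i} := by
  obtain ⟨e⟩ : Nonempty (ι × ℕ ≃ ℕ) := nonempty_equiv_of_countable
  let toPi : {x : ∀ i, X i | ∀ i, x i ∈ C i} ≃ₜ ∀ i, C i :=
    { Equiv.subtypePiEquivPi with
      continuous_toFun := continuous_pi fun i =>
        ((continuous_apply i).comp continuous_subtype_val).subtype_mk _
      continuous_invFun := (continuous_pi fun i =>
        continuous_subtype_val.comp (continuous_apply i)).subtype_mk _ }
  exact ⟨toPi.trans <| (Homeomorph.piCongrRight fun i => (hC i).some).trans <|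
    Homeomorph.piCurry.symm.trans (Homeomorph.piCongrLeft (Y := fun _ => Bool) e)⟩

end IsCantorSet

/-- `T` is constant along its own values, which makes `x ↦ x - T x` the inverse. -/
@[simps]
def shearHomeomorph {E : Type*} [TopologicalSpace E] [AddGroup E] [IsTopologicalAddGroup E]
    (T : E → E) (hT : Continuous T) (hTT : ∀ x y, T (x + T y) = T x) : E ≃ₜ E where
  toFun x := x + T x
  invFun x := x - T x
  left_inv x := by simp only [hTT, add_sub_cancel_right]
  right_inv x := by
    have : T (x - T x) = T x := by simpa using (hTT (x - T x) x).symm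
    simp [this]
  continuous_toFun := continuous_id.add hT
  continuous_invFun := continuous_id.sub hT

section Shears

variable {ι : Type*} [DecidableEq ι]

theorem exists_homeomorph_eval_eq_sum [Fintype ι] (j : ι) (φ : ℝ ≃ₜ ℝ) {f : ι → ℝ → ℝ}
    (hf : ∀ i, Continuous (f i)) :
    ∃ H : (ι → ℝ) ≃ₜ (ι → ℝ), ∀ x, H x j = ∑ i, update f j φ i (x i) := by
  set T : (ι → ℝ) → (ι → ℝ) := fun x => Pi.single j (∑ i ∈ Finset.univ.erase j, f i (x i))
  have hT : Continuous T := (continuous_single j).comp (by fun_prop)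
  have hTT : ∀ x y, T (x + T y) = T x := fun x y => by
    refine congrArg (Pi.single j) (Finset.sum_congr rfl fun i hi => ?_)
    simp only [T, Pi.add_apply, Pi.single_eq_of_ne (Finset.ne_of_mem_erase hi), add_zero]
  refine ⟨(Homeomorph.piCongrRight (update (fun _ => Homeomorph.refl ℝ) j φ)).trans
    (shearHomeomorph T hT hTT), fun x => ?_⟩
  rw [← Finset.add_sum_erase _ _ (Finset.mem_univ j)]
  simp only [T, Homeomorph.trans_apply, shearHomeomorph_apply, Pi.add_apply,
    Homeomorph.piCongrRight_apply, Pi.single_eq_same, update_self]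
  refine congrArg _ (Finset.sum_congr rfl fun i hi => ?_)
  simp [update_of_ne (Finset.ne_of_mem_erase hi)]

theorem exists_homeomorph_injOn_eval [Fintype ι] (j : ι) {C : ι → Set ℝ}
    (hC : ∀ i, IsCantorSet (C i)) :
    ∃ H : (ι → ℝ) ≃ₜ (ι → ℝ), InjOn (fun x => H x j) {x | ∀ i, x i ∈ C i} := by
  obtain ⟨e, he⟩ := Countable.exists_injective_nat (ι × ℕ)
  have hc0 : (0 : ℝ) < 1 / 4 := by norm_num
  have hc : (1 / 4 : ℝ) < 1 / 2 := by norm_num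
  have he' : ∀ i, Injective fun k => e (i, k) := fun i => he.comp (Prod.mk_right_injective i)
  set w : ι → ℕ → ℝ := fun i k => (1 / 4 : ℝ) ^ e (i, k)
  have hw : ∀ i, Summable (w i) := fun i =>
    (summable_geometric_of_lt_one hc0.le (by norm_num)).comp_injective (he' i)
  have hw0 : ∀ i k, 0 < w i k := fun i k => pow_pos hc0 _
  obtain ⟨φ, hφ⟩ := exists_homeomorph_mapsTo_range_digitSum (hC j).isCompact
    (hC j).interior_eq_empty (hw j) (hw0 j)
  choose f hfc hfinj hfmaps using fun i => (hC i).exists_continuous_injOn_mapsTo_range_digitSum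
    (hw i) (fun k => (hw0 i k).le) (digitSum_pow_injective hc0 hc (he' i))
  obtain ⟨H, hH⟩ := exists_homeomorph_eval_eq_sum j φ hfc
  refine ⟨H, (injOn_sum_of_mapsTo_range_digitSum hc0 hc he (fun i => ?_) (fun i => ?_)).congr
    fun x _ => (hH x).symm⟩
  · rcases eq_or_ne i j with rfl | hi
    · simpa only [update_self] using φ.injective.injOn
    · simpa only [update_of_ne hi] using hfinj i
  · rcases eq_or_ne i j with rfl | hi
    · simpa only [update_self] using hφ
    · simpa only [update_of_ne hi] using hfmaps i

/-- On a compact set on which the `j`-th coordinate is injective, the other coordinates are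
continuous functions of it; subtracting their extensions flattens the set into the `j`-th axis. -/
theorem exists_homeomorph_eval_eq_zero (j : ι) {K : Set (ι → ℝ)} (hK : IsCompact K)
    (hinj : InjOn (fun x => x j) K) :
    ∃ h : (ι → ℝ) ≃ₜ (ι → ℝ), ∀ x ∈ K, ∀ i ≠ j, h x i = 0 := by
  have : CompactSpace K := isCompact_iff_compactSpace.1 hK
  have hemb : IsClosedEmbedding fun x : K => x.1 j :=
    ((continuous_apply j).comp continuous_subtype_val).isClosedEmbedding
      fun x y h => Subtype.ext (hinj x.2 y.2 h)
  obtain ⟨G, hG⟩ := ContinuousMap.exists_extension' hemb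
    ⟨fun x : K => update x.1 j 0, continuous_subtype_val.update j continuous_const⟩
  set T : (ι → ℝ) → (ι → ℝ) := fun x => -update (G (x j)) j 0
  have hTT : ∀ x y, T (x + T y) = T x := fun x y => by simp [T]
  refine ⟨shearHomeomorph T (by fun_prop) hTT, fun x hx i hi => ?_⟩
  have hGx : G (x j) i = x i := by
    simpa [hi] using congrFun (congrFun hG ⟨x, hx⟩) i
  simp [T, hi, hGx]

end Shears

/-- The product of `n` Cantor sets in `ℝ` is a tame Cantor set in `ℝⁿ`. -/
theorem stmt12 (n : ℕ) (hn : 1 ≤ n) (C : Fin n → Set ℝ)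
    (hC : ∀ i, IsCantorSet (C i)) :
    IsTameCantorSet {x : Fin n → ℝ | ∀ i, x i ∈ C i} := by
  have : NeZero n := ⟨by omega⟩
  have hK := IsCantorSet.pi hC
  obtain ⟨H, hH⟩ := exists_homeomorph_injOn_eval 0 hC
  obtain ⟨h, hh⟩ := exists_homeomorph_eval_eq_zero 0 (hK.isCompact.image H.continuous)
    hH.image_of_comp
  refine ⟨hK, H.trans h, ?_⟩
  rintro _ ⟨x, hx, rfl⟩ i hi
  exact hh (H x) (mem_image_of_mem H hx) i (Fin.pos_iff_ne_zero.1 (Fin.val_pos_iff.1 hi))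
end

section
/- For each ε > 0, each compact nowhere dense subset C ⊆ ℝ and each open dense subset U ⊆ ℝ, there is a homeomorphism h : ℝ → ℝ such that h(C) ⊆ U and sup_{x∈ℝ} |h(x) − x| < ε. -/
/-!
Cut ℝ at points outside `C`, consecutive cuts less than `2δ` apart (possible since `Cᶜ` is
dense). Inside each gap `(a, a')` the compact set `C ∩ [a, a']` lies in some `[P, Q] ⊂ (a, a')`,
and two piecewise linear moves supported in `(a, a')` squeeze `[P, Q]` into an interval
`[c, d] ⊆ U`. These homeomorphisms fix every cut point, so none moves a point by more than
the length of its gap.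
-/

open Set Filter

def median3 (x y z : ℝ) : ℝ := max (min x y) (min (max x y) z)

lemma median3_eq_left {x y z : ℝ} (h : (y - x) * (z - x) ≤ 0) : median3 x y z = x := by
  rcases mul_nonpos_iff.1 h with ⟨h₁, h₂⟩ | ⟨h₁, h₂⟩ <;>
  · simp only [median3, min_def, max_def]
    split_ifs <;> linarith

lemma median3_self_right (x y : ℝ) : median3 x y y = y := by
  simp [median3]

/-- On `[a, b]` the median selects the affine map through `(a, a)` and `(p, q)` or the one through
`(p, q)` and `(b, b)`; outside `[a, b]` it selects `x`. -/
noncomputable def nodeMove (a b p q x : ℝ) : ℝ :=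
  median3 x (a + (q - a) / (p - a) * (x - a)) (b + (b - q) / (b - p) * (x - b))

section nodeMove

variable {a b p q : ℝ}

lemma nodeMove_continuous : Continuous (nodeMove a b p q) := by
  unfold nodeMove median3
  fun_prop

lemma nodeMove_apply_self (hap : a < p) (hpb : p < b) : nodeMove a b p q p = q := by
  have h₁ : a + (q - a) / (p - a) * (p - a) = q := by
    rw [div_mul_cancel₀ _ (by linarith)]; ring
  have h₂ : b + (b - q) / (b - p) * (p - b) = q := by
    rw [← neg_sub b p, mul_neg, div_mul_cancel₀ _ (by linarith)]; ring
  rw [nodeMove, h₁, h₂, median3_self_right]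

lemma nodeMove_apply_of_notMem (hap : a < p) (hpb : p < b) {x : ℝ} (hx : x ∉ Ioo a b) :
    nodeMove a b p q x = x := by
  apply median3_eq_left
  have hprod : (a + (q - a) / (p - a) * (x - a) - x) * (b + (b - q) / (b - p) * (x - b) - x) =
      -((q - p) ^ 2 / ((p - a) * (b - p))) * ((x - a) * (x - b)) := by
    have : p - a ≠ 0 := by linarith
    have : b - p ≠ 0 := by linarith
    field_simp
    ring
  have hout : 0 ≤ (x - a) * (x - b) := by
    rw [mem_Ioo, not_and_or, not_lt, not_lt] at hx
    rcases hx with hx | hx <;> nlinarith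
  rw [hprod]
  exact mul_nonpos_of_nonpos_of_nonneg (neg_nonpos.2 (by positivity)) hout

lemma nodeMove_strictMono (hap : a < p) (hpb : p < b) (haq : a < q) (hqb : q < b) :
    StrictMono (nodeMove a b p q) := by
  have hy : StrictMono fun x => a + (q - a) / (p - a) * (x - a) := fun x y hxy => by
    have : 0 < (q - a) / (p - a) := div_pos (by linarith) (by linarith)
    simp only
    nlinarith
  have hz : StrictMono fun x => b + (b - q) / (b - p) * (x - b) := fun x y hxy => by
    have : 0 < (b - q) / (b - p) := div_pos (by linarith) (by linarith)
    simp only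
    nlinarith
  intro x y hxy
  exact max_lt_max (min_lt_min hxy (hy hxy)) (min_lt_min (max_lt_max hxy (hy hxy)) (hz hxy))

lemma exists_orderIso_apply_eq (hap : a < p) (hpb : p < b) (haq : a < q) (hqb : q < b) :
    ∃ g : ℝ ≃o ℝ, (∀ x ∉ Ioo a b, g x = x) ∧ g p = q := by
  have hfix := fun x => nodeMove_apply_of_notMem (q := q) hap hpb (x := x)
  have hsurj : Function.Surjective (nodeMove a b p q) := by
    refine nodeMove_continuous.surjective (tendsto_id.congr' ?_) (tendsto_id.congr' ?_)
    · filter_upwards [eventually_ge_atTop b] with x hx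
      exact (hfix x fun h => hx.not_gt h.2).symm
    · filter_upwards [eventually_le_atBot a] with x hx
      exact (hfix x fun h => hx.not_gt h.1).symm
  exact ⟨(nodeMove_strictMono hap hpb haq hqb).orderIsoOfSurjective _ hsurj, hfix,
    nodeMove_apply_self hap hpb⟩

end nodeMove

lemma OrderIso.abs_apply_sub_le {g : ℝ ≃o ℝ} {a b : ℝ} (hab : a ≤ b)
    (hg : ∀ x ∉ Ioo a b, g x = x) (x : ℝ) : |g x - x| ≤ b - a := by
  by_cases hx : x ∈ Ioo a b
  · have ha : a ≤ g x := hg a (fun h => h.1.false) ▸ g.monotone hx.1.le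
    have hb : g x ≤ b := hg b (fun h => h.2.false) ▸ g.monotone hx.2.le
    rw [abs_le]
    constructor <;> linarith [hx.1, hx.2]
  · rw [hg x hx, sub_self, abs_zero]
    linarith

lemma exists_orderIso_mapsTo {a b : ℝ} {K U : Set ℝ} (hK : IsCompact K) (hKab : K ⊆ Ioo a b)
    (hU : IsOpen U) (hUab : (Ioo a b ∩ U).Nonempty) :
    ∃ g : ℝ ≃o ℝ, (∀ x ∉ Ioo a b, g x = x) ∧ MapsTo g K U := by
  obtain ⟨l, r, hlr, hlrU⟩ := (isOpen_Ioo.inter hU).exists_Ioo_subset hUab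
  obtain ⟨c, hlc, hcr⟩ := exists_between hlr
  obtain ⟨d, hcd, hdr⟩ := exists_between hcr
  have hcdU : Icc c d ⊆ Ioo a b ∩ U := (Icc_subset_Ioo hlc hdr).trans hlrU
  have hc := (hcdU (left_mem_Icc.2 hcd.le)).1
  have hd := (hcdU (right_mem_Icc.2 hcd.le)).1
  -- Enclosing `K ∪ {c, d}` rather than `K` makes `P < Q` even when `K` is small or empty.
  set K' := insert c (insert d K)
  have hK'ab : K' ⊆ Ioo a b := insert_subset hc (insert_subset hd hKab)
  obtain ⟨P, hPK', hPlow⟩ := ((hK.insert d).insert c).exists_isLeast (insert_nonempty _ _)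
  obtain ⟨Q, hQK', hQup⟩ := ((hK.insert d).insert c).exists_isGreatest (insert_nonempty _ _)
  have hPc : P ≤ c := hPlow (mem_insert _ _)
  have hdQ : d ≤ Q := hQup (mem_insert_of_mem _ (mem_insert _ _))
  obtain ⟨g₁, hg₁, hg₁P⟩ := exists_orderIso_apply_eq (hK'ab hPK').1 (hK'ab hPK').2 hc.1 hc.2
  have hcQ₁ : c < g₁ Q := hg₁P ▸ g₁.strictMono (hPc.trans_lt (hcd.trans_le hdQ))
  have hQ₁b : g₁ Q < b := hg₁ b (fun h => h.2.false) ▸ g₁.strictMono (hK'ab hQK').2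
  obtain ⟨g₂, hg₂, hg₂Q₁⟩ := exists_orderIso_apply_eq hcQ₁ hQ₁b hcd hd.2
  have hg₂c : g₂ c = c := hg₂ c fun h => h.1.false
  refine ⟨g₁.trans g₂, fun x hx => ?_, fun x hx => ?_⟩
  · rw [OrderIso.trans_apply, hg₁ x hx, hg₂ x fun h => hx ⟨hc.1.trans h.1, h.2⟩]
  · have hxP : P ≤ x := hPlow (mem_insert_of_mem _ (mem_insert_of_mem _ hx))
    have hxQ : x ≤ Q := hQup (mem_insert_of_mem _ (mem_insert_of_mem _ hx))
    have hlo : c ≤ g₁ x := hg₁P ▸ g₁.monotone hxP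
    refine (hcdU ⟨?_, ?_⟩).2
    · exact hg₂c ▸ g₂.monotone hlo
    · exact hg₂Q₁ ▸ g₂.monotone (g₁.monotone hxQ)

lemma exists_orderIso_mapsTo_Ioi {C U : Set ℝ} {δ : ℝ} (hδ : 0 < δ) (hC : IsClosed C)
    (hCd : Dense Cᶜ) (hU : IsOpen U) (hUd : Dense U) (n : ℕ) {a : ℝ} (ha : a ∉ C)
    (hCn : C ⊆ Iio (a + n * δ)) :
    ∃ h : ℝ ≃o ℝ, (∀ x ≤ a, h x = x) ∧ MapsTo h (C ∩ Ioi a) U ∧ ∀ x, |h x - x| ≤ 2 * δ := by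
  induction n generalizing a with
  | zero =>
    refine ⟨OrderIso.refl ℝ, fun _ _ => rfl, fun x hx => ?_, fun x => by simp [hδ.le]⟩
    have := hCn hx.1
    simp only [CharP.cast_eq_zero, zero_mul, add_zero, mem_Iio] at this
    exact absurd hx.2 this.not_gt
  | succ n ih =>
    obtain ⟨a', ha', haa'⟩ := hCd.exists_between (show a + δ < a + 2 * δ by linarith)
    obtain ⟨h', hh'fix, hh'U, hh'δ⟩ := ih ha' fun x hx => by
      have := hCn hx
      simp only [Nat.cast_succ, mem_Iio] at this ⊢
      linarith [haa'.1]
    have hK : C ∩ Icc a a' ⊆ Ioo a a' := fun x hx =>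
      ⟨hx.2.1.lt_of_ne (by rintro rfl; exact ha hx.1),
        hx.2.2.lt_of_ne (by rintro rfl; exact ha' hx.1)⟩
    obtain ⟨g, hg, hgU⟩ := exists_orderIso_mapsTo (isCompact_Icc.inter_left hC) hK hU
      (hUd.inter_open_nonempty _ isOpen_Ioo (nonempty_Ioo.2 (by linarith [haa'.1])))
    have hh'gt : ∀ x, a' < x → g (h' x) = h' x := fun x hx =>
      hg _ fun h => h.2.not_gt (hh'fix a' le_rfl ▸ h'.strictMono hx)
    refine ⟨h'.trans g, fun x hx => ?_, fun x hx => ?_, fun x => ?_⟩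
    · rw [OrderIso.trans_apply, hh'fix x (by linarith [haa'.1]), hg x fun h => h.1.not_ge hx]
    · rw [OrderIso.trans_apply]
      rcases lt_trichotomy x a' with hxa' | rfl | hxa'
      · rw [hh'fix x hxa'.le]
        exact hgU ⟨hx.1, hx.2.le, hxa'.le⟩
      · exact absurd hx.1 ha'
      · rw [hh'gt x hxa']
        exact hh'U ⟨hx.1, hxa'⟩
    · rw [OrderIso.trans_apply]
      rcases le_or_gt x a' with hxa' | hxa'
      · rw [hh'fix x hxa']
        exact (g.abs_apply_sub_le (by linarith [haa'.1]) hg x).trans (by linarith [haa'.2])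
      · rw [hh'gt x hxa']
        exact hh'δ x

/-- For each `ε > 0`, each compact nowhere dense `C ⊆ ℝ` and each open dense
`U ⊆ ℝ` there is a homeomorphism `h : ℝ → ℝ` with `h(C) ⊆ U` and
`sup_{x ∈ ℝ} |h(x) - x| < ε`. -/
theorem stmt13 (ε : ℝ) (hε : 0 < ε) (C : Set ℝ) (hCc : IsCompact C)
    (hCnd : IsNowhereDense C) (U : Set ℝ) (hU : IsOpen U) (hUd : Dense U) :
    ∃ h : ℝ ≃ₜ ℝ, (⇑h) '' C ⊆ U ∧ ∃ δ : ℝ, δ < ε ∧ ∀ x : ℝ, |h x - x| ≤ δ := by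
  have hCd : Dense Cᶜ := (isClosed_isNowhereDense_iff_compl.1 ⟨hCc.isClosed, hCnd⟩).2
  obtain ⟨lo, hlo⟩ := hCc.bddBelow
  obtain ⟨hi, hhi⟩ := hCc.bddAbove
  obtain ⟨n, hn⟩ := exists_nat_gt ((hi - lo + 1) / (ε / 3))
  rw [div_lt_iff₀ (by positivity)] at hn
  have hCn : C ⊆ Iio (lo - 1 + n * (ε / 3)) := fun x hx => by
    rw [mem_Iio]
    linarith [hhi hx]
  obtain ⟨h, -, hhU, hhδ⟩ := exists_orderIso_mapsTo_Ioi (by positivity) hCc.isClosed hCd hU hUd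
    n (fun hx => by linarith [hlo hx]) hCn
  refine ⟨h.toHomeomorph, ?_, 2 * (ε / 3), by linarith, hhδ⟩
  rintro _ ⟨x, hx, rfl⟩
  exact hhU ⟨hx, by rw [mem_Ioi]; linarith [hlo hx]⟩
end

section
/- Let n ≥ 1 and let Z ⊆ ℝ be a zero-dimensional (equivalently, totally disconnected) subspace of the real line. Then σK(Zⁿ) ⊆ σC₀; that is, every subset of Zⁿ ⊆ ℝⁿ that is contained in a countable union of compact subsets of Zⁿ belongs to the σ-ideal σC₀ on ℝⁿ. In particular, every compact subset K ⊆ ℝⁿ with K ⊆ Zⁿ is contained in a countable union of tame Cantor sets in ℝⁿ. -/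
/-!
A compact `K ⊆ Zⁿ` lies in the product of its coordinate projections `Dᵢ`, which are compact
subsets of `Z`, hence nowhere dense in `ℝ`. Splitting intervals at gaps of `Dᵢ` builds a Cantor
set `Eᵢ ⊇ Dᵢ` parametrised order-preservingly by `{0,1}^ω`, and the resulting order isomorphism
between `Eᵢ` and the ternary Cantor set `Sᵢ` using only the digits at positions `≡ i (mod n)`
extends to an order automorphism of `ℝ`. On `∏ Sᵢ` the sum of the coordinates just interleaves
digits, so it is injective; then every coordinate is a continuous function of the sum, and a shear
of `ℝⁿ` flattens `∏ Sᵢ`, hence the Cantor set `∏ Eᵢ ⊇ K`, onto the line.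
-/

open Set Cardinal

open Function

/-! ### Ternary Cantor sets with interleaved digits -/

theorem injective_of_strictMono_comp_ofLex {α : Type*} [Preorder α] {f : (ℕ → Bool) → α}
    (hf : StrictMono (f ∘ ofLex)) : Injective f :=
  fun _ _ h => toLex.injective (hf.injective h)

def cantorDigits (a : ℕ → Bool) (m : ℕ) : Fin 3 := if a m then 2 else 0

noncomputable def ternaryCantor (a : ℕ → Bool) : ℝ := Real.ofDigits (cantorDigits a)

theorem continuous_ternaryCantor : Continuous ternaryCantor :=
  Real.continuous_ofDigits.comp <| continuous_pi fun m =>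
    (continuous_of_discreteTopology (f := fun b : Bool => if b then (2 : Fin 3) else 0)).comp
      (continuous_apply m)

theorem ternaryCantor_lt_ternaryCantor {a b : ℕ → Bool} {k : ℕ} (hagree : ∀ j < k, a j = b j)
    (hak : a k = false) (hbk : b k = true) : ternaryCantor a < ternaryCantor b := by
  have hprefix : ∑ i ∈ Finset.range k, Real.ofDigitsTerm (cantorDigits a) i
      = ∑ i ∈ Finset.range k, Real.ofDigitsTerm (cantorDigits b) i :=
    Finset.sum_congr rfl fun i hi => by
      simp only [Real.ofDigitsTerm, cantorDigits, hagree i (Finset.mem_range.mp hi)]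
  have hterm_a : Real.ofDigitsTerm (cantorDigits a) k = 0 := by
    simp [Real.ofDigitsTerm, cantorDigits, hak]
  have hterm_b : Real.ofDigitsTerm (cantorDigits b) k = 2 * ((3 : ℕ) ^ (k + 1) : ℝ)⁻¹ := by
    simp [Real.ofDigitsTerm, cantorDigits, hbk]
  have ht : (0 : ℝ) < ((3 : ℕ) ^ (k + 1) : ℝ)⁻¹ := by positivity
  have htail_a := Real.ofDigits_le_one fun i => cantorDigits a (i + (k + 1))
  have htail_b := Real.ofDigits_nonneg fun i => cantorDigits b (i + (k + 1))
  rw [ternaryCantor, ternaryCantor, Real.ofDigits_eq_sum_add_ofDigits (cantorDigits a) (k + 1),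
    Real.ofDigits_eq_sum_add_ofDigits (cantorDigits b) (k + 1),
    Finset.sum_range_succ, Finset.sum_range_succ, hprefix, hterm_a, hterm_b]
  nlinarith

theorem strictMono_ternaryCantor : StrictMono (ternaryCantor ∘ ofLex) := by
  rintro a b ⟨k, hagree, hk⟩
  exact ternaryCantor_lt_ternaryCantor hagree (Bool.lt_iff.mp hk).1 (Bool.lt_iff.mp hk).2

theorem Real.sum_ofDigits {ι : Type*} (s : Finset ι) {b : ℕ} (d : ι → ℕ → Fin b) (d' : ℕ → Fin b)
    (h : ∀ m, ∑ i ∈ s, ((d i m : ℕ) : ℝ) = ((d' m : ℕ) : ℝ)) :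
    ∑ i ∈ s, Real.ofDigits (d i) = Real.ofDigits d' := by
  simp only [Real.ofDigits]
  rw [← Summable.tsum_finsetSum fun i _ => Real.summable_ofDigitsTerm]
  congr 1
  ext m
  simp only [Real.ofDigitsTerm, ← Finset.sum_mul, h]

section Interleave

variable {n : ℕ}

def interleaveEquiv (n : ℕ) : Fin (n + 1) × ℕ ≃ ℕ :=
  (Equiv.prodComm _ _).trans (Nat.divModEquiv (n + 1)).symm

def interleave (n : ℕ) : (Fin (n + 1) → ℕ → Bool) ≃ₜ (ℕ → Bool) :=
  Homeomorph.piCurry.symm.trans (Homeomorph.piCongrLeft (Y := fun _ => Bool) (interleaveEquiv n))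

theorem interleave_apply_interleaveEquiv (a : Fin (n + 1) → ℕ → Bool) (i : Fin (n + 1)) (k : ℕ) :
    interleave n a (interleaveEquiv n (i, k)) = a i k := by
  simp only [interleave, Homeomorph.trans_apply, Homeomorph.piCongrLeft_apply]
  simp

theorem strictMono_interleaveEquiv (i : Fin (n + 1)) :
    StrictMono fun k => interleaveEquiv n (i, k) := by
  intro k l hkl
  simp only [interleaveEquiv, Equiv.trans_apply, Equiv.prodComm_apply, Prod.swap_prod_mk,
    Nat.divModEquiv_symm_apply]
  nlinarith [i.isLt]

def spread (i : Fin (n + 1)) (b : ℕ → Bool) : ℕ → Bool :=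
  interleave n (update (fun _ _ => false) i b)

theorem spread_lt_spread (i : Fin (n + 1)) {b c : ℕ → Bool} (h : toLex b < toLex c) :
    toLex (spread i b) < toLex (spread i c) := by
  obtain ⟨k, hagree, hk⟩ := h
  refine ⟨interleaveEquiv n (i, k), fun m hm => ?_, ?_⟩
  · obtain ⟨⟨j, l⟩, rfl⟩ := (interleaveEquiv n).surjective m
    rw [Pi.toLex_apply, Pi.toLex_apply, spread, spread, interleave_apply_interleaveEquiv,
      interleave_apply_interleaveEquiv]
    rcases eq_or_ne j i with rfl | hji
    · simpa using hagree l ((strictMono_interleaveEquiv j).lt_iff_lt.mp hm)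
    · simp [update_of_ne hji]
  · simpa [spread, interleave_apply_interleaveEquiv] using hk

theorem sum_ternaryCantor_spread (a : Fin (n + 1) → ℕ → Bool) :
    ∑ i, ternaryCantor (spread i (a i)) = ternaryCantor (interleave n a) := by
  refine Real.sum_ofDigits _ _ _ fun m => ?_
  obtain ⟨⟨j, k⟩, rfl⟩ := (interleaveEquiv n).surjective m
  rw [Finset.sum_eq_single j]
  · simp [cantorDigits, spread, interleave_apply_interleaveEquiv]
  · intro i _ hij
    simp [cantorDigits, spread, interleave_apply_interleaveEquiv, update_of_ne hij.symm]
  · simp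

end Interleave

/-! ### A Cantor set through a compact nowhere dense subset of `ℝ` -/

def IsGapChoice (D : Set ℝ) (L R : ℝ → ℝ → ℝ) : Prop :=
  ∀ ⦃u v⦄, u < v → u < L u v ∧ L u v < R u v ∧ R u v < v ∧ Disjoint (Ioo (L u v) (R u v)) D ∧
    L u v - u ≤ 2 / 3 * (v - u) ∧ v - R u v ≤ 2 / 3 * (v - u)

theorem exists_isGapChoice {D : Set ℝ} (hD : IsClosed D) (hD' : interior D = ∅) :
    ∃ L R, IsGapChoice D L R := by
  suffices h : ∀ u v : ℝ, ∃ p q : ℝ, u < v → u < p ∧ p < q ∧ q < v ∧ Disjoint (Ioo p q) D ∧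
      p - u ≤ 2 / 3 * (v - u) ∧ v - q ≤ 2 / 3 * (v - u) by
    choose L R hLR using h
    exact ⟨L, R, fun u v huv => hLR u v huv⟩
  intro u v
  by_cases huv : u < v
  swap
  · exact ⟨0, 0, fun h => absurd h huv⟩
  obtain ⟨w, ⟨hw₁, hw₂⟩, hwD⟩ : ∃ w ∈ Ioo (u + (v - u) / 3) (v - (v - u) / 3), w ∉ D := by
    by_contra! h
    have hsub := interior_maximal h isOpen_Ioo
    rw [hD'] at hsub
    exact hsub ⟨(by linarith : u + (v - u) / 3 < (u + v) / 2), by linarith⟩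
  obtain ⟨p, q, ⟨hpw, hwq⟩, hpq⟩ :=
    (mem_nhds_iff_exists_Ioo_subset.mp (hD.isOpen_compl.mem_nhds hwD))
  refine ⟨max p (u + (v - u) / 3), min q (v - (v - u) / 3), fun _ => ⟨?_, ?_, ?_, ?_, ?_, ?_⟩⟩
  · exact lt_max_of_lt_right (by linarith)
  · exact max_lt (lt_min (hpw.trans hwq) (by linarith)) (lt_min (by linarith) (by linarith))
  · exact min_lt_of_right_lt (by linarith)
  · exact subset_compl_iff_disjoint_right.mp <|
      (Ioo_subset_Ioo (le_max_left _ _) (min_le_left _ _)).trans hpq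
  · have := max_le hpw.le hw₁.le
    linarith
  · have := le_min hwq.le hw₂.le
    linarith

def gapStep (L R : ℝ → ℝ → ℝ) (I : ℝ × ℝ) : Bool → ℝ × ℝ
  | false => (I.1, L I.1 I.2)
  | true => (R I.1 I.2, I.2)

def gapInterval (L R : ℝ → ℝ → ℝ) (I₀ : ℝ × ℝ) (a : ℕ → Bool) : ℕ → ℝ × ℝ
  | 0 => I₀
  | k + 1 => gapStep L R (gapInterval L R I₀ a k) (a k)

noncomputable def gapPoint (L R : ℝ → ℝ → ℝ) (I₀ : ℝ × ℝ) (a : ℕ → Bool) : ℝ :=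
  ⨆ k, (gapInterval L R I₀ a k).1

section GapScheme

variable {D : Set ℝ} {L R : ℝ → ℝ → ℝ} {I₀ : ℝ × ℝ}

theorem IsGapChoice.gapStep_spec (hLR : IsGapChoice D L R) {I : ℝ × ℝ} (hI : I.1 < I.2)
    (b : Bool) : (gapStep L R I b).1 < (gapStep L R I b).2 ∧ I.1 ≤ (gapStep L R I b).1 ∧
      (gapStep L R I b).2 ≤ I.2 ∧
      (gapStep L R I b).2 - (gapStep L R I b).1 ≤ 2 / 3 * (I.2 - I.1) := by
  obtain ⟨h₁, h₂, h₃, -, h₅, h₆⟩ := hLR hI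
  cases b <;> simp only [gapStep] <;> refine ⟨?_, ?_, ?_, ?_⟩ <;> linarith

theorem gapInterval_congr {a b : ℕ → Bool} {k : ℕ} (h : ∀ j < k, a j = b j) :
    gapInterval L R I₀ a k = gapInterval L R I₀ b k := by
  induction k with
  | zero => rfl
  | succ k ih =>
    simp only [gapInterval, ih fun j hj => h j (hj.trans k.lt_succ_self), h k k.lt_succ_self]

variable (hLR : IsGapChoice D L R) (h₀ : I₀.1 < I₀.2)
include hLR h₀

theorem gapInterval_fst_lt_snd (a : ℕ → Bool) (k : ℕ) :
    (gapInterval L R I₀ a k).1 < (gapInterval L R I₀ a k).2 := by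
  induction k with
  | zero => exact h₀
  | succ k ih => exact (hLR.gapStep_spec ih (a k)).1

theorem gapInterval_width_le (a : ℕ → Bool) (k : ℕ) :
    (gapInterval L R I₀ a k).2 - (gapInterval L R I₀ a k).1 ≤ (2 / 3) ^ k * (I₀.2 - I₀.1) := by
  induction k with
  | zero => simp [gapInterval]
  | succ k ih =>
    have := (hLR.gapStep_spec (gapInterval_fst_lt_snd hLR h₀ a k) (a k)).2.2.2
    rw [pow_succ]
    simp only [gapInterval]
    nlinarith

theorem antitone_Icc_gapInterval (a : ℕ → Bool) :
    Antitone fun k => Icc (gapInterval L R I₀ a k).1 (gapInterval L R I₀ a k).2 :=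
  antitone_nat_of_succ_le fun k =>
    have := hLR.gapStep_spec (gapInterval_fst_lt_snd hLR h₀ a k) (a k)
    Icc_subset_Icc this.2.1 this.2.2.1

theorem gapPoint_mem (a : ℕ → Bool) (k : ℕ) :
    gapPoint L R I₀ a ∈ Icc (gapInterval L R I₀ a k).1 (gapInterval L R I₀ a k).2 := by
  have hmem : ∀ j l, (gapInterval L R I₀ a j).1 ≤ (gapInterval L R I₀ a l).2 := fun j l =>
    (antitone_Icc_gapInterval hLR h₀ a (le_max_left j l)
      (left_mem_Icc.mpr (gapInterval_fst_lt_snd hLR h₀ a _).le)).1.trans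
    (antitone_Icc_gapInterval hLR h₀ a (le_max_right j l)
      (left_mem_Icc.mpr (gapInterval_fst_lt_snd hLR h₀ a _).le)).2
  exact ⟨le_ciSup ⟨_, forall_mem_range.mpr fun j => hmem j 0⟩ k, ciSup_le fun j => hmem j k⟩

theorem abs_sub_le_of_mem_gapInterval {a : ℕ → Bool} {k : ℕ} {x y : ℝ}
    (hx : x ∈ Icc (gapInterval L R I₀ a k).1 (gapInterval L R I₀ a k).2)
    (hy : y ∈ Icc (gapInterval L R I₀ a k).1 (gapInterval L R I₀ a k).2) :
    |x - y| ≤ (2 / 3) ^ k * (I₀.2 - I₀.1) :=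
  (abs_sub_le_of_le_of_le hx.1 hx.2 hy.1 hy.2).trans (gapInterval_width_le hLR h₀ a k)

theorem strictMono_gapPoint : StrictMono (gapPoint L R I₀ ∘ ofLex) := by
  rintro a b ⟨k, hagree, hk⟩
  obtain ⟨hak, hbk⟩ := Bool.lt_iff.mp hk
  have hgap := (hLR (gapInterval_fst_lt_snd hLR h₀ b k)).2.1
  calc gapPoint L R I₀ a ≤ (gapInterval L R I₀ a (k + 1)).2 := (gapPoint_mem hLR h₀ a _).2
    _ < (gapInterval L R I₀ b (k + 1)).1 := by
      simp only [gapInterval, gapInterval_congr hagree, hak, hbk, gapStep]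
      exact hgap
    _ ≤ gapPoint L R I₀ b := (gapPoint_mem hLR h₀ b _).1

theorem continuous_gapPoint : Continuous (gapPoint L R I₀) := by
  refine continuous_iff_continuousAt.mpr fun a => Metric.tendsto_nhds.mpr fun ε hε => ?_
  obtain ⟨k, hk⟩ : ∃ k : ℕ, (2 / 3 : ℝ) ^ k < ε / (I₀.2 - I₀.1) :=
    exists_pow_lt_of_lt_one (div_pos hε (sub_pos.mpr h₀)) (by norm_num)
  filter_upwards [(PiNat.isOpen_cylinder _ a k).mem_nhds (PiNat.self_mem_cylinder a k)] with b hb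
  have hI : gapInterval L R I₀ b k = gapInterval L R I₀ a k :=
    gapInterval_congr (PiNat.mem_cylinder_iff.mp hb)
  have := abs_sub_le_of_mem_gapInterval hLR h₀ (gapPoint_mem hLR h₀ b k)
    (hI ▸ gapPoint_mem hLR h₀ a k)
  rw [Real.dist_eq]
  rw [lt_div_iff₀ (sub_pos.mpr h₀)] at hk
  linarith

theorem subset_range_gapPoint : D ∩ Icc I₀.1 I₀.2 ⊆ range (gapPoint L R I₀) := by
  rintro x ⟨hxD, hx⟩
  set next : ℝ × ℝ → ℝ × ℝ := fun I => gapStep L R I (decide (L I.1 I.2 < x))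
  set a : ℕ → Bool := fun k => decide (L (next^[k] I₀).1 (next^[k] I₀).2 < x)
  have hI : ∀ k, gapInterval L R I₀ a k = next^[k] I₀ := by
    intro k
    induction k with
    | zero => rfl
    | succ k ih =>
      rw [iterate_succ_apply']
      change gapStep L R (gapInterval L R I₀ a k) (a k) = gapStep L R _ _
      rw [ih]
  have hxI : ∀ k, x ∈ Icc (gapInterval L R I₀ a k).1 (gapInterval L R I₀ a k).2 := by
    intro k
    induction k with
    | zero => exact hx
    | succ k ih =>
      obtain ⟨-, -, -, hdisj, -, -⟩ := hLR (gapInterval_fst_lt_snd hLR h₀ a k)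
      simp only [gapInterval]
      by_cases hLx : L (gapInterval L R I₀ a k).1 (gapInterval L R I₀ a k).2 < x
      · have hak : a k = true := by simpa [a, ← hI k] using hLx
        have hRx : R (gapInterval L R I₀ a k).1 (gapInterval L R I₀ a k).2 ≤ x :=
          not_lt.mp fun hxR => hdisj.notMem_of_mem_right hxD ⟨hLx, hxR⟩
        simp only [hak, gapStep]
        exact ⟨hRx, ih.2⟩
      · have hak : a k = false := by simpa [a, ← hI k] using hLx
        simp only [hak, gapStep]
        exact ⟨ih.1, not_lt.mp hLx⟩
  have hwidth : Filter.Tendsto (fun k : ℕ => (2 / 3 : ℝ) ^ k * (I₀.2 - I₀.1)) Filter.atTop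
      (nhds 0) := by
    simpa using (tendsto_pow_atTop_nhds_zero_of_lt_one (by norm_num : (0 : ℝ) ≤ 2 / 3)
      (by norm_num)).mul_const (I₀.2 - I₀.1)
  exact ⟨a, eq_of_abs_sub_nonpos (ge_of_tendsto' hwidth fun k =>
    abs_sub_le_of_mem_gapInterval hLR h₀ (gapPoint_mem hLR h₀ a k) (hxI k))⟩

end GapScheme

theorem exists_cantor_superset {D : Set ℝ} (hD : IsCompact D) (hD' : interior D = ∅) :
    ∃ e : (ℕ → Bool) → ℝ, Continuous e ∧ StrictMono (e ∘ ofLex) ∧ D ⊆ range e := by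
  obtain ⟨L, R, hLR⟩ := exists_isGapChoice hD.isClosed hD'
  obtain ⟨u, v, huv⟩ := bddBelow_bddAbove_iff_subset_Icc.mp ⟨hD.bddBelow, hD.bddAbove⟩
  have h₀ : (min u v, max u v + 1).1 < (min u v, max u v + 1).2 :=
    (min_le_max).trans_lt (lt_add_one _)
  refine ⟨gapPoint L R _, continuous_gapPoint hLR h₀, strictMono_gapPoint hLR h₀, fun x hx => ?_⟩
  exact subset_range_gapPoint hLR h₀ ⟨hx, (Icc_subset_Icc (min_le_left u v)
    ((le_max_right u v).trans (lt_add_one _).le)) (huv hx)⟩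

/-! ### Extending strictly monotone maps on compact sets to order automorphisms of `ℝ` -/

theorem exists_orderIso_eqOn_Icc {m M : ℝ} {g : ℝ → ℝ} (hmM : m ≤ M)
    (hg : StrictMonoOn g (Icc m M)) (hsurj : SurjOn g (Icc m M) (Icc (g m) (g M))) :
    ∃ Φ : ℝ ≃o ℝ, EqOn Φ g (Icc m M) := by
  set c : ℝ → ℝ := fun x => max m (min x M)
  have hc_mem : ∀ x, c x ∈ Icc m M := fun x => ⟨le_max_left _ _, max_le hmM (min_le_right _ _)⟩
  have hc_id : ∀ x ∈ Icc m M, c x = x := fun x hx => by simp [c, hx.1, hx.2]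
  have hc_mono : ∀ {x y}, x ≤ y → c x ≤ c y ∧ x - c x ≤ y - c y := by
    intro x y hxy
    simp only [c, max_def, min_def]
    constructor <;> split_ifs <;> linarith
  set Φ : ℝ → ℝ := fun x => g (c x) + (x - c x)
  have hΦ : StrictMono Φ := by
    intro x y hxy
    obtain ⟨h₁, h₂⟩ := hc_mono hxy.le
    rcases h₁.eq_or_lt with h | h
    · simp only [Φ, h]
      linarith
    · have := hg (hc_mem x) (hc_mem y) h
      simp only [Φ]
      linarith
  have hΦsurj : Surjective Φ := by
    intro y
    rcases lt_or_ge y (g m) with hym | hym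
    · refine ⟨m + (y - g m), ?_⟩
      have : c (m + (y - g m)) = m := max_eq_left (min_le_left _ _ |>.trans (by linarith))
      simp only [Φ, this]
      ring
    rcases le_or_gt y (g M) with hyM | hyM
    · obtain ⟨x, hx, rfl⟩ := hsurj ⟨hym, hyM⟩
      exact ⟨x, by simp [Φ, hc_id x hx]⟩
    · refine ⟨M + (y - g M), ?_⟩
      have : c (M + (y - g M)) = M := (congrArg _ (min_eq_right (by linarith))).trans
        (max_eq_right hmM)
      simp only [Φ, this]
      ring
  exact ⟨hΦ.orderIsoOfSurjective Φ hΦsurj, fun x hx => by simp [Φ, hc_id x hx]⟩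

/-- On `E` this is `ψ x`, since then `sSup (E ∩ Iic x) = x`; off `E` it interpolates `ψ` linearly
across the gap of `E` around `x`. -/
noncomputable def gapInterpolation (E : Set ℝ) (ψ : ℝ → ℝ) (x : ℝ) : ℝ :=
  ψ (sSup (E ∩ Iic x)) + (x - sSup (E ∩ Iic x)) * slope ψ (sSup (E ∩ Iic x)) (sInf (E ∩ Ici x))

section GapInterpolation

variable {E : Set ℝ} {ψ : ℝ → ℝ}

theorem gapInterpolation_of_mem {x : ℝ} (hx : x ∈ E) :
    gapInterpolation E ψ x = ψ x := by
  have hl : sSup (E ∩ Iic x) = x :=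
    IsGreatest.csSup_eq ⟨⟨hx, mem_Iic.mpr le_rfl⟩, fun _ ht => ht.2⟩
  simp [gapInterpolation, hl]

theorem gapInterpolation_of_mem_Ioo {x p q : ℝ} (hp : p ∈ E) (hq : q ∈ E)
    (hgap : Disjoint (Ioo p q) E) (hx : x ∈ Ioo p q) :
    gapInterpolation E ψ x = ψ p + (x - p) * slope ψ p q := by
  have hl : sSup (E ∩ Iic x) = p := IsGreatest.csSup_eq ⟨⟨hp, hx.1.le⟩, fun t ht =>
    not_lt.mp fun hpt => hgap.notMem_of_mem_right ht.1 ⟨hpt, ht.2.trans_lt hx.2⟩⟩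
  have hr : sInf (E ∩ Ici x) = q := IsLeast.csInf_eq ⟨⟨hq, hx.2.le⟩, fun t ht =>
    not_lt.mp fun htq => hgap.notMem_of_mem_right ht.1 ⟨hx.1.trans_le ht.2, htq⟩⟩
  rw [gapInterpolation, hl, hr]

theorem gapInterpolation_of_mem_Icc {x p q : ℝ} (hp : p ∈ E) (hq : q ∈ E)
    (hgap : Disjoint (Ioo p q) E) (hx : x ∈ Icc p q) :
    gapInterpolation E ψ x = ψ p + (x - p) * slope ψ p q := by
  rcases eq_or_lt_of_le hx.1 with rfl | hpx
  · simp [gapInterpolation_of_mem hp]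
  rcases eq_or_lt_of_le hx.2 with rfl | hxq
  · rw [gapInterpolation_of_mem hq, ← smul_eq_mul, sub_smul_slope, vsub_eq_sub, add_sub_cancel]
  exact gapInterpolation_of_mem_Ioo hp hq hgap ⟨hpx, hxq⟩

theorem exists_gap_of_notMem {x : ℝ} (hE : IsCompact E) (hl : ∃ p ∈ E, p ≤ x)
    (hr : ∃ q ∈ E, x ≤ q) (hxE : x ∉ E) :
    ∃ p ∈ E, ∃ q ∈ E, x ∈ Ioo p q ∧ Disjoint (Ioo p q) E := by
  obtain ⟨⟨hpE, hpx⟩, hp⟩ := (hE.inter_right isClosed_Iic).isGreatest_sSup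
    (hl.imp fun _ h => ⟨h.1, h.2⟩)
  obtain ⟨⟨hqE, hxq⟩, hq⟩ := (hE.inter_right isClosed_Ici).isLeast_sInf
    (hr.imp fun _ h => ⟨h.1, h.2⟩)
  refine ⟨_, hpE, _, hqE, ⟨lt_of_le_of_ne hpx fun h => hxE (h ▸ hpE),
    lt_of_le_of_ne hxq fun h => hxE (h ▸ hqE)⟩, ?_⟩
  refine disjoint_left.mpr fun t ⟨hpt, htq⟩ htE => ?_
  rcases le_total t x with htx | hxt
  · exact (hp ⟨htE, htx⟩).not_gt hpt
  · exact (hq ⟨htE, hxt⟩).not_gt htq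

theorem slope_pos_of_strictMonoOn {p q : ℝ} (hψ : StrictMonoOn ψ E) (hp : p ∈ E) (hq : q ∈ E)
    (hpq : p < q) : 0 < slope ψ p q := by
  rw [slope_def_field]
  exact div_pos (sub_pos.mpr (hψ hp hq hpq)) (sub_pos.mpr hpq)

theorem gapInterpolation_lt (hE : IsCompact E) (hψ : StrictMonoOn ψ E) {x t : ℝ}
    (hl : ∃ p ∈ E, p ≤ x) (ht : t ∈ E) (hxt : x < t) : gapInterpolation E ψ x < ψ t := by
  by_cases hxE : x ∈ E
  · rw [gapInterpolation_of_mem hxE]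
    exact hψ hxE ht hxt
  obtain ⟨p, hp, q, hq, hx, hgap⟩ := exists_gap_of_notMem hE hl ⟨t, ht, hxt.le⟩ hxE
  have hqt : q ≤ t := not_lt.mp fun htq => hgap.notMem_of_mem_right ht ⟨hx.1.trans hxt, htq⟩
  have hs := slope_pos_of_strictMonoOn hψ hp hq (hx.1.trans hx.2)
  have hchord : (q - p) * slope ψ p q = ψ q - ψ p := by
    rw [← smul_eq_mul, sub_smul_slope, vsub_eq_sub]
  rw [gapInterpolation_of_mem_Ioo hp hq hgap hx]
  nlinarith [hψ.monotoneOn hq ht hqt, hx.2]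

theorem lt_gapInterpolation (hE : IsCompact E) (hψ : StrictMonoOn ψ E) {x t : ℝ}
    (hr : ∃ q ∈ E, x ≤ q) (ht : t ∈ E) (htx : t < x) : ψ t < gapInterpolation E ψ x := by
  by_cases hxE : x ∈ E
  · rw [gapInterpolation_of_mem hxE]
    exact hψ ht hxE htx
  obtain ⟨p, hp, q, hq, hx, hgap⟩ := exists_gap_of_notMem hE ⟨t, ht, htx.le⟩ hr hxE
  have htp : t ≤ p := not_lt.mp fun hpt => hgap.notMem_of_mem_right ht ⟨hpt, htx.trans hx.2⟩
  have hs := slope_pos_of_strictMonoOn hψ hp hq (hx.1.trans hx.2)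
  rw [gapInterpolation_of_mem_Ioo hp hq hgap hx]
  nlinarith [hψ.monotoneOn ht hp htp, hx.1]

theorem strictMonoOn_gapInterpolation (hE : IsCompact E) (hne : E.Nonempty)
    (hψ : StrictMonoOn ψ E) : StrictMonoOn (gapInterpolation E ψ) (Icc (sInf E) (sSup E)) := by
  intro x hx y hy hxy
  have hl : ∀ z ∈ Icc (sInf E) (sSup E), ∃ p ∈ E, p ≤ z := fun z hz => ⟨_, hE.sInf_mem hne, hz.1⟩
  have hr : ∀ z ∈ Icc (sInf E) (sSup E), ∃ q ∈ E, z ≤ q := fun z hz => ⟨_, hE.sSup_mem hne, hz.2⟩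
  by_cases hExy : ∃ t ∈ E, t ∈ Icc x y
  · obtain ⟨t, ht, htx, hty⟩ := hExy
    have hty' : ψ t ≤ gapInterpolation E ψ y := by
      rcases hty.eq_or_lt with rfl | hty
      · exact (gapInterpolation_of_mem ht).ge
      · exact (lt_gapInterpolation hE hψ (hr y hy) ht hty).le
    rcases htx.eq_or_lt with rfl | hxt
    · rw [gapInterpolation_of_mem ht]
      exact lt_gapInterpolation hE hψ (hr y hy) ht hxy
    · exact (gapInterpolation_lt hE hψ (hl x hx) ht hxt).trans_le hty'
  push Not at hExy
  have hxE : x ∉ E := fun h => hExy x h ⟨le_rfl, hxy.le⟩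
  obtain ⟨p, hp, q, hq, hxpq, hgap⟩ := exists_gap_of_notMem hE (hl x hx) (hr x hx) hxE
  have hyq : y < q := not_le.mp fun hqy => hExy q hq ⟨hxpq.2.le, hqy⟩
  rw [gapInterpolation_of_mem_Ioo hp hq hgap hxpq,
    gapInterpolation_of_mem_Ioo hp hq hgap ⟨hxpq.1.trans hxy, hyq⟩]
  have hs := slope_pos_of_strictMonoOn hψ hp hq (hxpq.1.trans hxpq.2)
  nlinarith

theorem surjOn_gapInterpolation (hE : IsCompact E) (hne : E.Nonempty) (hψ : StrictMonoOn ψ E)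
    (hψc : ContinuousOn ψ E) : SurjOn (gapInterpolation E ψ) (Icc (sInf E) (sSup E))
      (Icc (ψ (sInf E)) (ψ (sSup E))) := by
  intro y hy
  have hcompact : ∀ s : Set ℝ, IsClosed s → IsCompact (E ∩ ψ ⁻¹' s) := fun s hs =>
    hE.of_isClosed_subset (hψc.preimage_isClosed_of_isClosed hE.isClosed hs) inter_subset_left
  obtain ⟨⟨hpE, hpy⟩, hp⟩ := (hcompact _ isClosed_Iic).isGreatest_sSup
    ⟨_, hE.sInf_mem hne, hy.1⟩
  obtain ⟨⟨hqE, hyq⟩, hq⟩ := (hcompact _ isClosed_Ici).isLeast_sInf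
    ⟨_, hE.sSup_mem hne, hy.2⟩
  set p := sSup (E ∩ ψ ⁻¹' Iic y)
  set q := sInf (E ∩ ψ ⁻¹' Ici y)
  have hpq : p ≤ q := not_lt.mp fun hqp =>
    (hψ hqE hpE hqp).not_ge ((mem_Iic.mp hpy).trans (mem_Ici.mp hyq))
  have hgap : Disjoint (Ioo p q) E := by
    refine disjoint_left.mpr fun t ⟨hpt, htq⟩ htE => ?_
    rcases le_total (ψ t) y with hty | hyt
    · exact (hp ⟨htE, hty⟩).not_gt hpt
    · exact (hq ⟨htE, hyt⟩).not_gt htq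
  have hchord : ContinuousOn (fun x => ψ p + (x - p) * slope ψ p q) (Icc p q) := by fun_prop
  obtain ⟨x, hx, hxy⟩ := intermediate_value_Icc hpq hchord ⟨by simpa using hpy, by
    simpa [← smul_eq_mul, sub_smul_slope] using hyq⟩
  refine ⟨x, ⟨(csInf_le hE.bddBelow hpE).trans hx.1, hx.2.trans (le_csSup hE.bddAbove hqE)⟩, ?_⟩
  rw [gapInterpolation_of_mem_Icc hpE hqE hgap hx]
  exact hxy

end GapInterpolation

theorem exists_orderIso_eqOn {E : Set ℝ} {ψ : ℝ → ℝ} (hE : IsCompact E) (hne : E.Nonempty)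
    (hψ : StrictMonoOn ψ E) (hψc : ContinuousOn ψ E) : ∃ Φ : ℝ ≃o ℝ, EqOn Φ ψ E := by
  have hm := hE.sInf_mem hne
  have hM := hE.sSup_mem hne
  have hsub : E ⊆ Icc (sInf E) (sSup E) := fun x hx =>
    ⟨csInf_le hE.bddBelow hx, le_csSup hE.bddAbove hx⟩
  obtain ⟨Φ, hΦ⟩ := exists_orderIso_eqOn_Icc (hsub hm).2 (strictMonoOn_gapInterpolation hE hne hψ)
    (by simpa only [gapInterpolation_of_mem hm, gapInterpolation_of_mem hM] using
      surjOn_gapInterpolation hE hne hψ hψc)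
  exact ⟨Φ, fun x hx => (hΦ (hsub hx)).trans (gapInterpolation_of_mem hx)⟩


/-! ### Flattening onto the line -/

def Homeomorph.addShear {G : Type*} [TopologicalSpace G] [AddGroup G] [IsTopologicalAddGroup G]
    (F : G → G) (hF : Continuous F) (hinv : ∀ x y, F (x + F y) = F x) : G ≃ₜ G where
  toFun x := x + F x
  invFun y := y - F y
  left_inv x := by simp [hinv]
  right_inv y := by
    have := hinv (y - F y) y
    rw [sub_add_cancel] at this
    simp [← this]
  continuous_toFun := continuous_id.add hF
  continuous_invFun := continuous_id.sub hF

section Flatten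

variable {n : ℕ}

theorem exists_homeomorph_image_subset_line {T : Set (Fin (n + 1) → ℝ)} (hT : IsCompact T)
    (hinj : InjOn (fun x => x 0) T) :
    ∃ h : (Fin (n + 1) → ℝ) ≃ₜ (Fin (n + 1) → ℝ), h '' T ⊆ line (n + 1) := by
  have : CompactSpace T := isCompact_iff_compactSpace.mp hT
  have hemb := ((continuous_apply 0).comp continuous_subtype_val).isClosedEmbedding
    (injOn_iff_injective.mp hinj)
  obtain ⟨g, hg⟩ := ContinuousMap.exists_restrict_eq hemb.isClosed_range
    ⟨fun q => (hemb.isEmbedding.toHomeomorph.symm q : Fin (n + 1) → ℝ), by fun_prop⟩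
  have hgT : ∀ x ∈ T, g (x 0) = x := fun x hx => by
    have := congr($hg ⟨x 0, ⟨x, hx⟩, rfl⟩)
    simp only [ContinuousMap.restrict_apply, ContinuousMap.coe_mk] at this
    rw [this]
    exact congrArg Subtype.val (hemb.isEmbedding.toHomeomorph_symm_apply ⟨x, hx⟩)
  let F : (Fin (n + 1) → ℝ) → Fin (n + 1) → ℝ := fun x j => if j = 0 then 0 else -g (x 0) j
  have hF : Continuous F := continuous_pi fun j => by
    by_cases hj : j = 0 <;> simp only [F, hj, if_true, if_false] <;> fun_prop
  refine ⟨Homeomorph.addShear F hF fun x y => by simp [F], ?_⟩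
  rintro _ ⟨x, hx, rfl⟩ j hj
  have hj0 : j ≠ 0 := Fin.pos_iff_ne_zero.mp hj
  simp [Homeomorph.addShear, F, hj0, hgT x hx]

theorem exists_homeomorph_image_subset_line_of_injOn_sum {T : Set (Fin (n + 1) → ℝ)}
    (hT : IsCompact T) (hinj : InjOn (fun x => ∑ i, x i) T) :
    ∃ h : (Fin (n + 1) → ℝ) ≃ₜ (Fin (n + 1) → ℝ), h '' T ⊆ line (n + 1) := by
  let F : (Fin (n + 1) → ℝ) → Fin (n + 1) → ℝ := fun x => Pi.single 0 (∑ j : Fin n, x j.succ)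
  let A := Homeomorph.addShear F ((continuous_single 0).comp (by fun_prop)) fun x y => by simp [F]
  have hA : ∀ x, A x 0 = ∑ i, x i := fun x => by
    simp [A, Homeomorph.addShear, F, Fin.sum_univ_succ]
  obtain ⟨h, hh⟩ := exists_homeomorph_image_subset_line (hT.image A.continuous) <| by
    rintro _ ⟨x, hx, rfl⟩ _ ⟨y, hy, rfl⟩ hxy
    simp only [hA] at hxy
    rw [hinj hx hy hxy]
  exact ⟨A.trans h, fun _ ⟨x, hx, hxe⟩ => hxe ▸ hh ⟨A x, ⟨x, hx, rfl⟩, rfl⟩⟩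

end Flatten

/-! ### Tame Cantor sets containing products of nowhere dense sets -/

theorem isCantorSet_range {X : Type*} [TopologicalSpace X] [T2Space X] {f : (ℕ → Bool) → X}
    (hf : Continuous f) (hinj : Injective f) : IsCantorSet (range f) :=
  ⟨(hf.isClosedEmbedding hinj).isEmbedding.toHomeomorph.symm⟩

theorem exists_orderIso_comp_eq {e c : (ℕ → Bool) → ℝ} (he : Continuous e)
    (he' : StrictMono (e ∘ ofLex)) (hc : Continuous c) (hc' : StrictMono (c ∘ ofLex)) :
    ∃ Φ : ℝ ≃o ℝ, ∀ a, Φ (e a) = c a := by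
  have he_inj := injective_of_strictMono_comp_ofLex he'
  have hemb := (he.isClosedEmbedding he_inj).isEmbedding
  set ψ : ℝ → ℝ := fun x => c (invFun e x)
  have hψe : ∀ a, ψ (e a) = c a := fun a => by simp only [ψ, leftInverse_invFun he_inj a]
  have hψ : StrictMonoOn ψ (range e) := by
    rintro _ ⟨a, rfl⟩ _ ⟨b, rfl⟩ hab
    rw [hψe, hψe]
    exact hc' (he'.lt_iff_lt.mp hab)
  have hψc : ContinuousOn ψ (range e) := by
    have hrestrict : (range e).domRestrict ψ = c ∘ hemb.toHomeomorph.symm := by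
      ext ⟨_, a, rfl⟩
      simpa using hψe a
    rw [continuousOn_iff_continuous_domRestrict, hrestrict]
    exact hc.comp hemb.toHomeomorph.symm.continuous
  obtain ⟨Φ, hΦ⟩ := exists_orderIso_eqOn (isCompact_range he) (range_nonempty e) hψ hψc
  exact ⟨Φ, fun a => (hΦ (mem_range_self a)).trans (hψe a)⟩

theorem exists_isTameCantorSet_pi_superset {n : ℕ} {D : Fin (n + 1) → Set ℝ}
    (hD : ∀ i, IsCompact (D i)) (hD' : ∀ i, interior (D i) = ∅) :
    ∃ T, IsTameCantorSet T ∧ univ.pi D ⊆ T := by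
  choose e he he' hDe using fun i => exists_cantor_superset (hD i) (hD' i)
  have hc : ∀ i : Fin (n + 1), Continuous (ternaryCantor ∘ spread i) := fun i =>
    continuous_ternaryCantor.comp ((interleave n).continuous.comp (by fun_prop))
  have hc' : ∀ i : Fin (n + 1), StrictMono (ternaryCantor ∘ spread i ∘ ofLex) := fun i _ _ hab =>
    strictMono_ternaryCantor (spread_lt_spread i hab)
  choose Φ hΦ using fun i => exists_orderIso_comp_eq (he i) (he' i) (hc i) (hc' i)
  let F : (Fin (n + 1) → ℕ → Bool) → Fin (n + 1) → ℝ := fun a i => e i (a i)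
  have hF : Continuous F := continuous_pi fun i => (he i).comp (continuous_apply i)
  have hF_inj : Injective F := fun a b hab => funext fun i =>
    injective_of_strictMono_comp_ofLex (he' i) (congr_fun hab i)
  let G : (Fin (n + 1) → ℕ → Bool) → Fin (n + 1) → ℝ := fun a i => ternaryCantor (spread i (a i))
  have hG : Continuous G := continuous_pi fun i => (hc i).comp (continuous_apply i)
  have hG_sum : ∀ a, ∑ i, G a i = ternaryCantor (interleave n a) := sum_ternaryCantor_spread
  obtain ⟨h, hh⟩ := exists_homeomorph_image_subset_line_of_injOn_sum (isCompact_range hG) <| by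
    rintro _ ⟨a, rfl⟩ _ ⟨b, rfl⟩ hab
    simp only [hG_sum] at hab
    rw [(interleave n).injective (injective_of_strictMono_comp_ofLex strictMono_ternaryCantor hab)]
  have hΦF : ∀ a, (Homeomorph.piCongrRight fun i => (Φ i).toHomeomorph) (F a) = G a := fun a =>
    funext fun i => hΦ i (a i)
  refine ⟨range (F ∘ (interleave n).symm),
    ⟨isCantorSet_range (hF.comp (interleave n).symm.continuous)
      (hF_inj.comp (interleave n).symm.injective), ?_⟩, ?_⟩
  · refine ⟨(Homeomorph.piCongrRight fun i => (Φ i).toHomeomorph).trans h, ?_⟩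
    rintro _ ⟨_, ⟨a, rfl⟩, rfl⟩
    exact hh ⟨G ((interleave n).symm a), mem_range_self _, by simp [hΦF]⟩
  · intro x hx
    choose a ha using fun i => hDe i (hx i trivial)
    exact ⟨interleave n a, by simp [F, ha]⟩

theorem Real.interior_eq_empty_of_isTotallyDisconnected {Z : Set ℝ}
    (hZ : IsTotallyDisconnected Z) : interior Z = ∅ := by
  refine eq_empty_of_forall_notMem fun x hx => ?_
  obtain ⟨ε, hε, hball⟩ := Metric.mem_nhds_iff.mp (mem_interior_iff_mem_nhds.mp hx)
  have := hZ _ hball (convex_ball x ε).isPreconnected (Metric.mem_ball_self hε)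
    (show x + ε / 2 ∈ Metric.ball x ε by simp [abs_of_pos, hε])
  linarith

theorem exists_isTameCantorSet_superset {n : ℕ} {Z : Set ℝ} (hZ : IsTotallyDisconnected Z)
    {K : Set (Fin (n + 1) → ℝ)} (hK : IsCompact K) (hKZ : K ⊆ {x | ∀ i, x i ∈ Z}) :
    ∃ T, IsTameCantorSet T ∧ K ⊆ T := by
  have hproj : ∀ i, interior ((fun x => x i) '' K) = ∅ := fun i =>
    subset_empty_iff.mp <| Real.interior_eq_empty_of_isTotallyDisconnected hZ ▸
      interior_mono (image_subset_iff.mpr fun x hx => hKZ hx i)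
  obtain ⟨T, hT, hKT⟩ :=
    exists_isTameCantorSet_pi_superset (fun i => hK.image (continuous_apply i)) hproj
  exact ⟨T, hT, fun x hx => hKT fun i _ => mem_image_of_mem _ hx⟩

theorem stmt19_general (n : ℕ) (hn : 1 ≤ n) (Z : Set ℝ) (hZ : IsTotallyDisconnected Z)
    (A : Set (Fin n → ℝ))
    (hK : ∃ K : ℕ → Set (Fin n → ℝ),
      (∀ k, IsCompact (K k) ∧ K k ⊆ {x : Fin n → ℝ | ∀ i, x i ∈ Z}) ∧
      A ⊆ ⋃ k, K k) :
    A ∈ sigmaC0 n := by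
  obtain ⟨m, rfl⟩ := Nat.exists_eq_add_of_le' hn
  obtain ⟨K, hK, hAK⟩ := hK
  choose T hT hKT using fun k => exists_isTameCantorSet_superset hZ (hK k).1 (hK k).2
  exact ⟨T, hT, hAK.trans (iUnion_mono hKT)⟩

/-- For any zero-dimensional (totally disconnected) `Z ⊆ ℝ` we have
`σK(Zⁿ) ⊆ σC₀`: every subset of `Zⁿ` contained in a countable union of compact
subsets of `Zⁿ` belongs to `σC₀`. -/
theorem stmt19 (n : ℕ) (hn : 1 ≤ n) (Z : Set ℝ) (hZ : IsTotallyDisconnected Z)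
    (A : Set (Fin n → ℝ)) (hAZ : A ⊆ {x : Fin n → ℝ | ∀ i, x i ∈ Z})
    (hK : ∃ K : ℕ → Set (Fin n → ℝ),
      (∀ k, IsCompact (K k) ∧ K k ⊆ {x : Fin n → ℝ | ∀ i, x i ∈ Z}) ∧
      A ⊆ ⋃ k, K k) :
    A ∈ sigmaC0 n :=
  stmt19_general n hn Z hZ A hK
end
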